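/- arXiv:math/0204107 — 9 statements merged into one kernel-verified Lean document; each statement's English description precedes it below -/
import Mathlib

section
/- Let n ≥ 1 and let R = (R_1,…,R_n) be a tuple of bounded linear operators on a complex Hilbert space L. Let K be the closed linear span of {R^α (R_i R_j − R_j R_i) h : h ∈ L, 1 ≤ i, j ≤ n, α a word}. If M is any closed subspace of L such that R_i^* M ⊆ M for all i and R_i^* R_j^* x = R_j^* R_i^* x for all x ∈ M and all 1 ≤ i, j ≤ n, then M ⊆ K^⊥. -/
open ContinuousLinearMap

noncomputable def wordProd {n : ℕ} {L : Type*} [NormedAddCommGroup L] [InnerProductSpace ℂ L]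
    (R : Fin n → L →L[ℂ] L) (α : List (Fin n)) : L →L[ℂ] L :=
  (α.map R).prod

/-!
Every generator `R^α (R_i R_j - R_j R_i) h` of `K` pairs with `x ∈ M` as
`⟪(R_i R_j - R_j R_i) h, (R^α)^* x⟫ = ⟪h, (R_j^* R_i^* - R_i^* R_j^*) (R^α)^* x⟫`, which vanishes
because `(R^α)^*` maps `M` into itself and the adjoints commute on `M`. Hence `M` is orthogonal
to the span of the generators, and so to its closure `K`.
-/

theorem inner_commutator_apply_eq_zero {𝕜 E : Type*} [RCLike 𝕜] [NormedAddCommGroup E]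
    [InnerProductSpace 𝕜 E] [CompleteSpace E] (A B : E →L[𝕜] E) {x : E}
    (hx : adjoint A (adjoint B x) = adjoint B (adjoint A x)) (h : E) :
    inner 𝕜 (A (B h) - B (A h)) x = 0 := by
  rw [inner_sub_left, ← adjoint_inner_right A, ← adjoint_inner_right B, ← adjoint_inner_right B,
    ← adjoint_inner_right A, hx, sub_self]

section wordProd

variable {n : ℕ} {L : Type*} [NormedAddCommGroup L] [InnerProductSpace ℂ L]
  (R : Fin n → L →L[ℂ] L)

theorem wordProd_cons (a : Fin n) (α : List (Fin n)) :
    wordProd R (a :: α) = R a * wordProd R α :=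
  List.prod_cons

variable [CompleteSpace L]

theorem adjoint_wordProd_apply_mem {M : Submodule ℂ L}
    (hM : ∀ i, ∀ x ∈ M, adjoint (R i) x ∈ M) (α : List (Fin n)) {x : L} (hx : x ∈ M) :
    adjoint (wordProd R α) x ∈ M := by
  induction α generalizing x with
  | nil => simpa [wordProd, adjoint_one] using hx
  | cons a α ih =>
    rw [wordProd_cons, mul_def, adjoint_comp]
    exact ih (hM a x hx)

end wordProd

theorem stmt1_general {n : ℕ} {L : Type*} [NormedAddCommGroup L]
    [InnerProductSpace ℂ L] [CompleteSpace L] (R : Fin n → L →L[ℂ] L)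
    (K : Submodule ℂ L)
    (hK : K = (Submodule.span ℂ {y : L | ∃ (α : List (Fin n)) (i j : Fin n) (h : L),
      y = wordProd R α ((R i) ((R j) h) - (R j) ((R i) h))}).topologicalClosure)
    (M : Submodule ℂ L)
    (hMinv : ∀ i : Fin n, ∀ x ∈ M, adjoint (R i) x ∈ M)
    (hMcomm : ∀ x ∈ M, ∀ i j : Fin n,
      adjoint (R i) (adjoint (R j) x) = adjoint (R j) (adjoint (R i) x)) :
    M ≤ Kᗮ := by
  rw [hK, Submodule.orthogonal_closure, ← Submodule.isOrtho_iff_le, ← M.span_eq]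
  refine Submodule.isOrtho_span.mpr ?_
  rintro x hx _ ⟨α, i, j, h, rfl⟩
  have hWx : adjoint (wordProd R α) x ∈ M := adjoint_wordProd_apply_mem R hMinv α hx
  rw [inner_eq_zero_symm, ← adjoint_inner_right]
  exact inner_commutator_apply_eq_zero _ _ (hMcomm _ hWx i j) h

/-- any closed subspace `M` that is invariant under all `R_i^*` and on
which the adjoints commute is contained in `K^⊥`, where `K` is the closed span of
`{R^α (R_iR_j - R_jR_i)h}`. -/
theorem stmt1 {n : ℕ} (hn : 1 ≤ n) {L : Type*} [NormedAddCommGroup L]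
    [InnerProductSpace ℂ L] [CompleteSpace L] (R : Fin n → L →L[ℂ] L)
    (K : Submodule ℂ L)
    (hK : K = (Submodule.span ℂ {y : L | ∃ (α : List (Fin n)) (i j : Fin n) (h : L),
      y = wordProd R α ((R i) ((R j) h) - (R j) ((R i) h))}).topologicalClosure)
    (M : Submodule ℂ L) (hMclosed : IsClosed (M : Set L))
    (hMinv : ∀ i : Fin n, ∀ x ∈ M, adjoint (R i) x ∈ M)
    (hMcomm : ∀ x ∈ M, ∀ i j : Fin n,
      adjoint (R i) (adjoint (R j) x) = adjoint (R j) (adjoint (R i) x)) :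
    M ≤ Kᗮ :=
  stmt1_general R K hK M hMinv hMcomm
end

section
/- Fix n ≥ 2 and let H = ℓ²(Λ̃) be the Hilbert space of square-summable complex functions on the set Λ̃ of all finite words (including the empty word) with letters in {1,…,n}, with standard orthonormal basis {e_α : α ∈ Λ̃}. Suppose V_1,…,V_n are bounded operators on H satisfying V_i e_α = e_{iα} for every word α, where iα denotes the word α with the letter i prepended (this is the full Fock space over ℂⁿ with its left creation operators). Then the maximal commuting piece space H^c(V) = {x ∈ H : (V_i^* V_j^* − V_j^* V_i^*)(V^α)^* x = 0 for all i, j, α} equals the closed linear span of the symmetrized basis vectors { Σ_{σ ∈ S_m} e_{(α_{σ(1)},…,α_{σ(m)})} : m ≥ 0, α = (α_1,…,α_m) a word of length m }, i.e. it is the Boson (symmetric) Fock space over ℂⁿ sitting inside the full Fock space. -/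
/-!
The creation operators act on coordinates by `(V_i^* x)(w) = x(i w)`, so `(V^α)^* x` is
`w ↦ x(α w)` and membership in `H^c(V)` says exactly that `x(u i j v) = x(u j i v)` for all
words. As adjacent transpositions generate all permutations, `H^c(V)` is the closed subspace
of vectors whose coordinates are invariant under permuting the letters of a word. The
symmetrized basis vectors lie in it. Conversely a symmetric `x` is the ℓ²-sum of its
homogeneous components, and for symmetric `x` the degree-`m` component is `1/m!` times the
finite combination `∑_f x(f) • symmetrize f`.
-/

open ContinuousLinearMap

/-- The maximal commuting piece space of a tuple. -/
noncomputable def commPieceSet {n : ℕ} {L : Type*} [NormedAddCommGroup L]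
    [InnerProductSpace ℂ L] [CompleteSpace L] (R : Fin n → L →L[ℂ] L) : Set L :=
  {x : L | ∀ (i j : Fin n) (α : List (Fin n)),
    adjoint (R i) (adjoint (R j) (adjoint (wordProd R α) x)) =
    adjoint (R j) (adjoint (R i) (adjoint (wordProd R α) x))}

theorem List.Perm.exists_equiv_get_eq {ι : Type*} {l₁ l₂ : List ι} (h : l₁.Perm l₂) :
    ∃ e : Fin l₂.length ≃ Fin l₁.length, l₂.get = l₁.get ∘ e := by
  induction h with
  | nil => exact ⟨Equiv.refl _, rfl⟩
  | cons a _ ih =>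
    obtain ⟨e, he⟩ := ih
    refine ⟨(finSuccEquiv _).trans ((Equiv.optionCongr e).trans (finSuccEquiv _).symm),
      funext ?_⟩
    refine Fin.cases ?_ fun k => ?_
    · simp
    · simpa using congrFun he k
  | swap a b l =>
    refine ⟨Equiv.swap 0 1, funext ?_⟩
    refine Fin.cases ?_ (Fin.cases ?_ fun k => ?_) <;> simp [Equiv.swap_apply_def, Fin.ext_iff]
  | trans _ _ ih₁ ih₂ =>
    obtain ⟨e₁, he₁⟩ := ih₁
    obtain ⟨e₂, he₂⟩ := ih₂
    exact ⟨e₂.trans e₁, by rw [he₂, he₁]; rfl⟩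

theorem List.Perm.apply_eq_of_forall_swap {ι β : Type*} {g : List ι → β}
    (hg : ∀ (u v : List ι) (i j : ι), g (u ++ i :: j :: v) = g (u ++ j :: i :: v))
    {l₁ l₂ : List ι} (h : l₁.Perm l₂) : g l₁ = g l₂ := by
  suffices ∀ u, g (u ++ l₁) = g (u ++ l₂) by simpa using this []
  induction h with
  | nil => exact fun _ => rfl
  | cons a _ ih => exact fun u => by simpa using ih (u ++ [a])
  | swap a b l => exact fun u => hg u l b a
  | trans _ _ ih₁ ih₂ => exact fun u => (ih₁ u).trans (ih₂ u)

section HomogeneousComponent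

variable {ι E : Type*} [Fintype ι] [DecidableEq ι] [NormedAddCommGroup E] {p : ENNReal}

noncomputable def homogeneousComponent (x : lp (fun _ : List ι => E) p) (m : ℕ) :
    lp (fun _ : List ι => E) p :=
  ∑ f : Fin m → ι, lp.single p (List.ofFn f) (x (List.ofFn f))

theorem hasSum_homogeneousComponent [Fact (1 ≤ p)] (hp : p ≠ ⊤)
    (x : lp (fun _ : List ι => E) p) : HasSum (homogeneousComponent x) x :=
  (List.equivSigmaTuple.symm.hasSum_iff.mpr (lp.hasSum_single hp x)).sigma
    fun _ => hasSum_fintype _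

end HomogeneousComponent

section FockSpace

variable {n : ℕ}

local notation "𝓕" n:max => lp (fun _ : List (Fin n) => ℂ) 2

theorem inner_single_one_left (x : 𝓕 n) (w : List (Fin n)) :
    inner ℂ (lp.single 2 w (1 : ℂ)) x = x w := by
  simp [lp.inner_single_left]

theorem adjoint_apply_eq_inner (A : 𝓕 n →L[ℂ] 𝓕 n) (x : 𝓕 n) (w : List (Fin n)) :
    adjoint A x w = inner ℂ (A (lp.single 2 w 1)) x := by
  rw [← inner_single_one_left, adjoint_inner_right]

def IsLeftCreation (V : Fin n → 𝓕 n →L[ℂ] 𝓕 n) : Prop :=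
  ∀ (i : Fin n) (α : List (Fin n)), V i (lp.single 2 α 1) = lp.single 2 (i :: α) 1

namespace IsLeftCreation

variable {V : Fin n → 𝓕 n →L[ℂ] 𝓕 n}

theorem wordProd_single (hV : IsLeftCreation V) (α β : List (Fin n)) :
    wordProd V α (lp.single 2 β 1) = lp.single 2 (α ++ β) 1 := by
  induction α with
  | nil => rfl
  | cons i α ih =>
    change V i (wordProd V α (lp.single 2 β 1)) = _
    rw [ih, hV]
    rfl

theorem adjoint_wordProd_apply (hV : IsLeftCreation V) (α : List (Fin n)) (x : 𝓕 n)
    (w : List (Fin n)) : adjoint (wordProd V α) x w = x (α ++ w) := by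
  rw [adjoint_apply_eq_inner, hV.wordProd_single, inner_single_one_left]

theorem adjoint_apply (hV : IsLeftCreation V) (i : Fin n) (x : 𝓕 n) (w : List (Fin n)) :
    adjoint (V i) x w = x (i :: w) := by
  simpa [wordProd] using hV.adjoint_wordProd_apply [i] x w

theorem mem_commPieceSet_iff (hV : IsLeftCreation V) (x : 𝓕 n) :
    x ∈ commPieceSet V ↔
      ∀ (u v : List (Fin n)) (i j : Fin n), x (u ++ i :: j :: v) = x (u ++ j :: i :: v) := by
  simp only [commPieceSet, lp.ext_iff, funext_iff, hV.adjoint_apply,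
    hV.adjoint_wordProd_apply]
  exact ⟨fun h u v i j => h j i u v, fun h i j u v => h u v j i⟩

end IsLeftCreation

def symmetricFock (n : ℕ) : Submodule ℂ (𝓕 n) where
  carrier := {x | ∀ ⦃w w' : List (Fin n)⦄, w.Perm w' → x w = x w'}
  add_mem' hx hy _ _ h := congr_arg₂ (· + ·) (hx h) (hy h)
  zero_mem' _ _ _ := rfl
  smul_mem' c _ hx _ _ h := congr_arg (c * ·) (hx h)

theorem IsLeftCreation.commPieceSet_eq {V : Fin n → 𝓕 n →L[ℂ] 𝓕 n}
    (hV : IsLeftCreation V) : commPieceSet V = symmetricFock n := by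
  ext x
  rw [hV.mem_commPieceSet_iff]
  exact ⟨fun h _ _ => List.Perm.apply_eq_of_forall_swap h,
    fun h u v i j => h ((List.Perm.swap j i v).append_left u)⟩

theorem isClosed_symmetricFock : IsClosed (symmetricFock n : Set (𝓕 n)) := by
  simp only [symmetricFock, Submodule.coe_set_mk, AddSubmonoid.coe_set_mk,
    AddSubsemigroup.coe_set_mk, Set.ofPred_forall]
  exact isClosed_iInter fun w => isClosed_iInter fun w' => isClosed_iInter fun _ =>
    isClosed_eq (lp.evalCLM ℂ _ 2 w).continuous (lp.evalCLM ℂ _ 2 w').continuous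

theorem mem_symmetricFock_iff_ofFn (x : 𝓕 n) :
    x ∈ symmetricFock n ↔
      ∀ (m : ℕ) (f : Fin m → Fin n) (τ : Equiv.Perm (Fin m)),
        x (List.ofFn (f ∘ τ)) = x (List.ofFn f) := by
  refine ⟨fun hx m f τ => hx (τ.ofFn_comp_perm f), fun hx w w' h => ?_⟩
  have hx' {k m : ℕ} (g : Fin m → Fin n) (e : Fin k ≃ Fin m) :
      x (List.ofFn (g ∘ e)) = x (List.ofFn g) := by
    obtain rfl := Fin.equiv_iff_eq.mp ⟨e⟩
    exact hx k g e
  obtain ⟨e, he⟩ := h.exists_equiv_get_eq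
  rw [← List.ofFn_get w, ← List.ofFn_get w', he]
  exact (hx' _ e).symm

noncomputable def symmetrize {m : ℕ} (f : Fin m → Fin n) : 𝓕 n :=
  ∑ σ : Equiv.Perm (Fin m), lp.single 2 (List.ofFn (f ∘ σ)) 1

theorem symmetrize_mem_symmetricFock {m : ℕ} (f : Fin m → Fin n) :
    symmetrize f ∈ symmetricFock n := by
  rw [mem_symmetricFock_iff_ofFn]
  intro k g τ
  simp only [symmetrize, lp.coeFn_sum, Finset.sum_apply, lp.single_apply, Pi.single_apply]
  by_cases hkm : k = m
  · subst hkm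
    simp only [List.ofFn_inj]
    refine Fintype.sum_equiv (Equiv.mulRight τ⁻¹) _ _ fun σ => ?_
    simp only [Equiv.coe_mulRight, Equiv.Perm.coe_mul, Equiv.Perm.inv_def,
      ← Function.comp_assoc, Equiv.eq_comp_symm]
  · have hne (h : Fin k → Fin n) (σ : Equiv.Perm (Fin m)) :
        List.ofFn h ≠ List.ofFn (f ∘ σ) := fun e => hkm (by simpa using congrArg List.length e)
    simp [hne]

theorem symmetrize_get_ofFn {m : ℕ} (f : Fin m → Fin n) :
    symmetrize (List.ofFn f).get = symmetrize f :=
  congrArg (fun w : (Σ k, Fin k → Fin n) => symmetrize w.2)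
    (List.equivSigmaTuple.apply_symm_apply ⟨m, f⟩)

theorem factorial_smul_homogeneousComponent {x : 𝓕 n} (hx : x ∈ symmetricFock n) (m : ℕ) :
    m.factorial • homogeneousComponent x m =
      ∑ f : Fin m → Fin n, x (List.ofFn f) • symmetrize f := by
  rw [mem_symmetricFock_iff_ofFn] at hx
  have hshift (σ : Equiv.Perm (Fin m)) :
      ∑ f : Fin m → Fin n, x (List.ofFn f) • lp.single 2 (List.ofFn (f ∘ σ)) (1 : ℂ) =
        homogeneousComponent x m :=
    calc _ = ∑ f : Fin m → Fin n,
            x (List.ofFn (f ∘ σ)) • lp.single 2 (List.ofFn (f ∘ σ)) (1 : ℂ) := by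
          simp only [hx]
      _ = ∑ f : Fin m → Fin n, x (List.ofFn f) • lp.single 2 (List.ofFn f) (1 : ℂ) :=
          Fintype.sum_equiv (Equiv.arrowCongr σ.symm (Equiv.refl _)) _ _ fun _ => rfl
      _ = homogeneousComponent x m := by
          simp [homogeneousComponent, ← lp.single_smul]
  simp only [symmetrize, Finset.smul_sum]
  rw [Finset.sum_comm, Finset.sum_congr rfl fun σ _ => hshift σ, Finset.sum_const,
    Finset.card_univ, Fintype.card_perm, Fintype.card_fin]

theorem homogeneousComponent_mem_span {x : 𝓕 n} (hx : x ∈ symmetricFock n) (m : ℕ) :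
    homogeneousComponent x m ∈
      Submodule.span ℂ {v | ∃ α : List (Fin n), v = symmetrize α.get} := by
  have hm : (m.factorial : ℂ) ≠ 0 := Nat.cast_ne_zero.mpr m.factorial_ne_zero
  rw [← Submodule.smul_mem_iff _ hm, Nat.cast_smul_eq_nsmul,
    factorial_smul_homogeneousComponent hx]
  exact Submodule.sum_mem _ fun f _ => Submodule.smul_mem _ _
    (Submodule.subset_span ⟨List.ofFn f, (symmetrize_get_ofFn f).symm⟩)

theorem topologicalClosure_span_symmetrize :
    Submodule.topologicalClosure
        (Submodule.span ℂ {v : 𝓕 n | ∃ α : List (Fin n), v = symmetrize α.get}) =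
      symmetricFock n := by
  refine le_antisymm ?_ fun x hx => ?_
  · refine Submodule.topologicalClosure_minimal _ (Submodule.span_le.mpr ?_)
      isClosed_symmetricFock
    rintro _ ⟨α, rfl⟩
    exact symmetrize_mem_symmetricFock _
  · refine (Submodule.isClosed_topologicalClosure _).mem_of_tendsto
      (hasSum_homogeneousComponent (by simp) x).tendsto_sum_nat (.of_forall fun _ => ?_)
    exact Submodule.sum_mem _ fun m _ =>
      Submodule.le_topologicalClosure _ (homogeneousComponent_mem_span hx m)

end FockSpace

theorem stmt4_general {n : ℕ}
    (V : Fin n → lp (fun _ : List (Fin n) => ℂ) 2 →L[ℂ] lp (fun _ : List (Fin n) => ℂ) 2)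
    (hV : ∀ (i : Fin n) (α : List (Fin n)),
      V i (lp.single 2 α (1 : ℂ)) = lp.single 2 (i :: α) (1 : ℂ)) :
    commPieceSet V =
      ((Submodule.span ℂ
        {v : lp (fun _ : List (Fin n) => ℂ) 2 | ∃ α : List (Fin n),
          v = ∑ σ : Equiv.Perm (Fin α.length),
            lp.single 2 (List.ofFn fun k => α.get (σ k)) (1 : ℂ)}).topologicalClosure :
        Set (lp (fun _ : List (Fin n) => ℂ) 2)) := by
  have hV' : IsLeftCreation V := hV
  rw [hV'.commPieceSet_eq]
  exact congrArg SetLike.coe topologicalClosure_span_symmetrize.symm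

/-- for the left creation operators on the full Fock space
`ℓ²(Λ̃)` over `ℂⁿ` (`Λ̃` = all words in `{1,…,n}`), the maximal commuting piece
space is the closed span of the symmetrized basis vectors, i.e. the Boson Fock
space sitting inside the full Fock space. -/
theorem stmt4 {n : ℕ} (hn : 2 ≤ n)
    (V : Fin n → lp (fun _ : List (Fin n) => ℂ) 2 →L[ℂ] lp (fun _ : List (Fin n) => ℂ) 2)
    (hV : ∀ (i : Fin n) (α : List (Fin n)),
      V i (lp.single 2 α (1 : ℂ)) = lp.single 2 (i :: α) (1 : ℂ)) :
    commPieceSet V =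
      ((Submodule.span ℂ
        {v : lp (fun _ : List (Fin n) => ℂ) 2 | ∃ α : List (Fin n),
          v = ∑ σ : Equiv.Perm (Fin α.length),
            lp.single 2 (List.ofFn fun k => α.get (σ k)) (1 : ℂ)}).topologicalClosure :
        Set (lp (fun _ : List (Fin n) => ℂ) 2)) :=
  stmt4_general V hV
end

section
/- Let Δ be a positive bounded operator on a complex Hilbert space H and let M be a closed subspace of H. Let C : M → M be the compression of Δ² to M, i.e. C = P_M Δ² ι_M where ι_M is the inclusion of M into H and P_M is the orthogonal projection of H onto M. If the closure of the range of Δ is finite-dimensional and its dimension equals the dimension of the closure of the range of C, then the closure of Δ(M) equals the closure of the range of Δ, i.e. closure(Δ M) = closure(Δ H). -/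
open ContinuousLinearMap

/-! `N := Δ(M)` lies in `R := closure (range Δ)`, hence is finite-dimensional and closed. The
compression factors as `C = (P_M ∘ Δ) ∘ Δ ∘ ι_M`, so the closure of its range lies in the closed
finite-dimensional space `(P_M ∘ Δ)(N)`, giving `dim R = dim (closure (range C)) ≤ dim N ≤ dim R`.
Thus `N = R`. -/

open Module

namespace Submodule

variable {𝕜 E F : Type*} [NontriviallyNormedField 𝕜] [AddCommGroup E] [Module 𝕜 E]
  [AddCommGroup F] [Module 𝕜 F]

section TopologicalCodomain

variable [TopologicalSpace F] [IsTopologicalAddGroup F] [ContinuousSMul 𝕜 F]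

theorem map_le_topologicalClosure_range (T : E →ₗ[𝕜] F) (M : Submodule 𝕜 E) :
    M.map T ≤ (LinearMap.range T).topologicalClosure :=
  LinearMap.map_le_range.trans (le_topologicalClosure _)

variable [CompleteSpace 𝕜] [T2Space F]

theorem closure_image_eq_closure_range_of_finrank_le (T : E →ₗ[𝕜] F) (M : Submodule 𝕜 E)
    [FiniteDimensional 𝕜 (LinearMap.range T).topologicalClosure]
    (h : finrank 𝕜 (LinearMap.range T).topologicalClosure ≤ finrank 𝕜 (M.map T)) :
    closure (T '' M) = closure (Set.range T) := by
  have hle := map_le_topologicalClosure_range T M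
  have : FiniteDimensional 𝕜 (M.map T) := finiteDimensional_of_le hle
  have hmap : M.map T = (LinearMap.range T).topologicalClosure := eq_of_le_of_finrank_le hle h
  rw [← map_coe, (closed_of_finiteDimensional _).closure_eq, hmap, topologicalClosure_coe,
    LinearMap.coe_range]

end TopologicalCodomain

theorem topologicalClosure_range_le_map_map [CompleteSpace 𝕜] {G : Type*} [AddCommGroup G]
    [Module 𝕜 G] [TopologicalSpace G] [IsTopologicalAddGroup G] [ContinuousSMul 𝕜 G] [T2Space G]
    {M : Submodule 𝕜 E} (T : E →ₗ[𝕜] F) (g : F →ₗ[𝕜] G)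
    [FiniteDimensional 𝕜 (M.map T)] (C : M →ₗ[𝕜] G) (hC : ∀ x : M, C x = g (T x)) :
    (LinearMap.range C).topologicalClosure ≤ (M.map T).map g := by
  refine topologicalClosure_minimal _ ?_ (closed_of_finiteDimensional _)
  rintro _ ⟨x, rfl⟩
  exact ⟨T x, mem_map_of_mem x.2, (hC x).symm⟩

end Submodule

theorem stmt7_general {H : Type*} [NormedAddCommGroup H] [InnerProductSpace ℂ H]
    (Δ : H →L[ℂ] H)
    (M : Submodule ℂ H) [CompleteSpace M]
    (C : M →L[ℂ] M)
    (hC : ∀ x : M, C x = M.orthogonalProjectionOnto (Δ (Δ (x : H))))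
    (hfin : FiniteDimensional ℂ ↥((LinearMap.range (Δ : H →ₗ[ℂ] H)).topologicalClosure))
    (hrank : Module.rank ℂ ↥((LinearMap.range (Δ : H →ₗ[ℂ] H)).topologicalClosure) =
      Module.rank ℂ ↥((LinearMap.range (C : M →ₗ[ℂ] M)).topologicalClosure)) :
    closure (Δ '' (M : Set H)) = closure (Set.range Δ) := by
  set N := M.map (Δ : H →ₗ[ℂ] H)
  have : FiniteDimensional ℂ N :=
    Submodule.finiteDimensional_of_le (Submodule.map_le_topologicalClosure_range _ M)
  let g : H →ₗ[ℂ] M := M.orthogonalProjectionOnto.toLinearMap ∘ₗ (Δ : H →ₗ[ℂ] H)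
  refine Submodule.closure_image_eq_closure_range_of_finrank_le (Δ : H →ₗ[ℂ] H) M ?_
  calc finrank ℂ (LinearMap.range (Δ : H →ₗ[ℂ] H)).topologicalClosure
      = finrank ℂ (LinearMap.range (C : M →ₗ[ℂ] M)).topologicalClosure :=
        congrArg Cardinal.toNat hrank
    _ ≤ finrank ℂ (N.map g) :=
        Submodule.finrank_mono (Submodule.topologicalClosure_range_le_map_map _ g _ hC)
    _ ≤ finrank ℂ N := Submodule.finrank_map_le g N

/-- let `Δ ≥ 0` on `H`, `M ⊆ H` a closed subspace and `C = P_M Δ² ι_M`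
the compression of `Δ²` to `M`. If the closure of the range of `Δ` is
finite-dimensional with dimension equal to that of the closure of the range of `C`,
then `closure (Δ M) = closure (Δ H)`. -/
theorem stmt7 {H : Type*} [NormedAddCommGroup H] [InnerProductSpace ℂ H] [CompleteSpace H]
    (Δ : H →L[ℂ] H) (hΔ : Δ.IsPositive)
    (M : Submodule ℂ H) [CompleteSpace M]
    (C : M →L[ℂ] M)
    (hC : ∀ x : M, C x = M.orthogonalProjectionOnto (Δ (Δ (x : H))))
    (hfin : FiniteDimensional ℂ ↥((LinearMap.range (Δ : H →ₗ[ℂ] H)).topologicalClosure))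
    (hrank : Module.rank ℂ ↥((LinearMap.range (Δ : H →ₗ[ℂ] H)).topologicalClosure) =
      Module.rank ℂ ↥((LinearMap.range (C : M →ₗ[ℂ] M)).topologicalClosure)) :
    closure (Δ '' (M : Set H)) = closure (Set.range Δ) :=
  stmt7_general Δ M C hC hfin hrank
end

section
/- Let n ≥ 1 and let T = (T_1,…,T_n) be a spherical unitary on a complex Hilbert space H, i.e. the T_i are commuting bounded operators, each T_i is normal, and T_1 T_1^* + ⋯ + T_n T_n^* = I. Let H be a closed subspace of a complex Hilbert space L and let W = (W_1,…,W_n) be a minimal isometric dilation of T: each W_i is a bounded operator on L with W_i^* W_j = δ_{ij} I, W_i^* u = T_i^* u for all u ∈ H and all i, and the closed linear span of {W^α u : u ∈ H, α a word} is L. Then the maximal commuting piece space of W equals H: L^c(W) = {x ∈ L : (W_i^* W_j^* − W_j^* W_i^*)(W^α)^* x = 0 for all i, j, α} = H. -/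
open ContinuousLinearMap

/-!
`H ⊆ L^c(W)` because on `H` the `W_i^*` act as the commuting `T_i^*`. Conversely let
`y ∈ L^c(W) ⊖ H`. Sphericality gives `u = ∑ⱼ W_j T_j^* u` for `u ∈ H`, hence
`⟪w, u⟫ = ∑_{|α| = m} ⟪W^{α*} w, W^{α*} u⟫` for every `m`. Fix `i` and `u ∈ H` and put
`g_a = δ_{ai} u - T_a^* T_i u`, so that `⟪W_i^* y, u⟫ = ∑_a ⟪W_a^* y, g_a⟫`. Since `W^{β*} y`
only depends on the letters of `β`, this sum equals `∑_β ⟪W^{β*} y, W^{(β ∖ k)*} g_{β_k}⟫` for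
each of the `N` positions `k` of words `β` of length `N` (`removeNthKernel`). Summed over `β`,
the kernels at two different positions are orthogonal: this is where normality of the `T_i`
enters. Averaging over `k` and Cauchy–Schwarz then bound `N |⟪W_i^* y, u⟫|²` by
`‖y‖² ∑_a ‖g_a‖²`, so `W_i^* y ⊥ H`. Inductively `W^{α*} y ⊥ H` for all `α`, and `y = 0` by
minimality.
-/

open scoped InnerProductSpace

lemma List.perm_ofFn_insertNth {α : Type*} {m : ℕ} (k : Fin (m + 1)) (a : α) (γ : Fin m → α) :
    (List.ofFn (Fin.insertNth k a γ)).Perm (a :: List.ofFn γ) := by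
  rw [← List.ofFn_cons, ← Fin.insertNth_comp_cycleRange_symm]
  exact (Equiv.Perm.ofFn_comp_perm _ _).symm

lemma List.perm_ofFn_cons_removeNth {α : Type*} {m : ℕ} (k : Fin (m + 1)) (β : Fin (m + 1) → α) :
    (List.ofFn β).Perm (β k :: List.ofFn (Fin.removeNth k β)) := by
  simpa using List.perm_ofFn_insertNth k (β k) (Fin.removeNth k β)

lemma Fin.sum_pi_eq_sum_insertNth {ι M : Type*} [Fintype ι] [AddCommMonoid M]
    {m : ℕ} (k : Fin (m + 1)) (f : (Fin (m + 1) → ι) → M) :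
    ∑ β, f β = ∑ a, ∑ γ : Fin m → ι, f (Fin.insertNth k a γ) := by
  rw [← (Fin.insertNthEquiv (fun _ ↦ ι) k).sum_comp, Fintype.sum_prod_type]
  rfl

lemma Fin.sum_pi_eq_sum_cons {ι M : Type*} [Fintype ι] [AddCommMonoid M]
    {m : ℕ} (f : (Fin (m + 1) → ι) → M) :
    ∑ β, f β = ∑ a, ∑ γ : Fin m → ι, f (Fin.cons a γ) := by
  simp only [Fin.sum_pi_eq_sum_insertNth 0, Fin.insertNth_zero']

lemma norm_sum_inner_sq_le {𝕜 ι E : Type*} [RCLike 𝕜] [NormedAddCommGroup E]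
    [InnerProductSpace 𝕜 E] (s : Finset ι) (f g : ι → E) :
    ‖∑ i ∈ s, ⟪f i, g i⟫_𝕜‖ ^ 2 ≤ (∑ i ∈ s, ‖f i‖ ^ 2) * ∑ i ∈ s, ‖g i‖ ^ 2 :=
  calc ‖∑ i ∈ s, ⟪f i, g i⟫_𝕜‖ ^ 2 ≤ (∑ i ∈ s, ‖f i‖ * ‖g i‖) ^ 2 := by
        gcongr
        exact (norm_sum_le _ _).trans (Finset.sum_le_sum fun i _ ↦ norm_inner_le_norm _ _)
    _ ≤ _ := Finset.sum_mul_sq_le_sq_mul_sq _ _ _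

lemma sum_norm_adjoint_sq_eq_of_sum_eq_one {E : Type*} [NormedAddCommGroup E]
    [InnerProductSpace ℂ E] [CompleteSpace E] {n : ℕ} {T : Fin n → E →L[ℂ] E}
    (hsum : ∑ i, T i ∘L adjoint (T i) = 1) (x : E) :
    ∑ i, ‖adjoint (T i) x‖ ^ 2 = ‖x‖ ^ 2 := by
  simp only [← inner_self_eq_norm_sq (𝕜 := ℂ), ← map_sum, adjoint_inner_left, ← inner_sum,
    ← comp_apply, ← sum_apply, hsum, one_apply_eq_self]

lemma adjoint_apply_comm_of_comp_comm {E : Type*} [NormedAddCommGroup E]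
    [InnerProductSpace ℂ E] [CompleteSpace E] {S T : E →L[ℂ] E} (h : S ∘L T = T ∘L S) (x : E) :
    adjoint S (adjoint T x) = adjoint T (adjoint S x) := by
  simpa only [adjoint_comp, comp_apply] using congr(adjoint $(h.symm) x)

section Words

variable {n : ℕ} {L : Type*} [NormedAddCommGroup L] [InnerProductSpace ℂ L]

lemma wordProd_cons_s8 (R : Fin n → L →L[ℂ] L) (j : Fin n) (l : List (Fin n)) :
    wordProd R (j :: l) = R j ∘L wordProd R l := by
  simp [wordProd, mul_def]

variable [CompleteSpace L]

lemma adjoint_wordProd_nil (R : Fin n → L →L[ℂ] L) : adjoint (wordProd R []) = 1 :=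
  adjoint_id

lemma adjoint_wordProd_cons_apply (R : Fin n → L →L[ℂ] L) (j : Fin n) (l : List (Fin n))
    (x : L) : adjoint (wordProd R (j :: l)) x = adjoint (wordProd R l) (adjoint (R j) x) := by
  rw [wordProd_cons_s8, adjoint_comp, comp_apply]

variable {R : Fin n → L →L[ℂ] L} {x : L}

lemma adjoint_mem_commPieceSet (hx : x ∈ commPieceSet R) (j : Fin n) :
    adjoint (R j) x ∈ commPieceSet R := by
  intro i i' α
  simpa only [adjoint_wordProd_cons_apply] using hx i i' (j :: α)

lemma adjoint_comm_of_mem_commPieceSet (hx : x ∈ commPieceSet R) (i j : Fin n) :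
    adjoint (R i) (adjoint (R j) x) = adjoint (R j) (adjoint (R i) x) := by
  simpa [adjoint_wordProd_nil] using hx i j []

lemma sub_mem_commPieceSet {x' : L} (hx : x ∈ commPieceSet R) (hx' : x' ∈ commPieceSet R) :
    x - x' ∈ commPieceSet R := by
  intro i j α
  simp only [map_sub, hx i j α, hx' i j α]

lemma adjoint_wordProd_eq_of_perm {l₁ l₂ : List (Fin n)} (h : l₁.Perm l₂)
    (hx : x ∈ commPieceSet R) : adjoint (wordProd R l₁) x = adjoint (wordProd R l₂) x := by
  induction h generalizing x with
  | nil => rfl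
  | cons a _ ih =>
    simp only [adjoint_wordProd_cons_apply, ih (adjoint_mem_commPieceSet hx a)]
  | swap a b l =>
    simp only [adjoint_wordProd_cons_apply, adjoint_comm_of_mem_commPieceSet hx a b]
  | trans _ _ ih₁ ih₂ => rw [ih₁ hx, ih₂ hx]

end Words

section RowIsometry

variable {n : ℕ} {L : Type*} [NormedAddCommGroup L] [InnerProductSpace ℂ L] [CompleteSpace L]
  {W : Fin n → L →L[ℂ] L}

lemma inner_apply_apply_eq_ite
    (hW : ∀ i j, adjoint (W i) ∘L W j = if i = j then 1 else 0) (i j : Fin n) (x z : L) :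
    ⟪W i x, W j z⟫_ℂ = if i = j then ⟪x, z⟫_ℂ else 0 := by
  rw [← adjoint_inner_right, ← comp_apply, hW]
  split_ifs <;> simp

lemma norm_sub_sum_apply_adjoint_sq (hW : ∀ i j, adjoint (W i) ∘L W j = if i = j then 1 else 0)
    (w : L) :
    ‖w - ∑ j, W j (adjoint (W j) w)‖ ^ 2 = ‖w‖ ^ 2 - ∑ j, ‖adjoint (W j) w‖ ^ 2 := by
  have h_inner : RCLike.re ⟪w, ∑ j, W j (adjoint (W j) w)⟫_ℂ = ∑ j, ‖adjoint (W j) w‖ ^ 2 := by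
    simp only [inner_sum, map_sum, ← inner_self_eq_norm_sq (𝕜 := ℂ), adjoint_inner_left]
  have h_norm : ‖∑ j, W j (adjoint (W j) w)‖ ^ 2 = ∑ j, ‖adjoint (W j) w‖ ^ 2 := by
    rw [← inner_self_eq_norm_sq (𝕜 := ℂ)]
    simp only [sum_inner, inner_sum, inner_apply_apply_eq_ite hW, Finset.sum_ite_eq',
      Finset.mem_univ, if_true]
    simp only [map_sum, inner_self_eq_norm_sq]
  rw [@norm_sub_sq ℂ, h_inner, h_norm]
  ring

lemma sum_norm_adjoint_sq_le (hW : ∀ i j, adjoint (W i) ∘L W j = if i = j then 1 else 0)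
    (w : L) : ∑ j, ‖adjoint (W j) w‖ ^ 2 ≤ ‖w‖ ^ 2 := by
  have := norm_sub_sum_apply_adjoint_sq hW w
  nlinarith [sq_nonneg ‖w - ∑ j, W j (adjoint (W j) w)‖]

lemma sum_apply_adjoint_eq_self (hW : ∀ i j, adjoint (W i) ∘L W j = if i = j then 1 else 0)
    {w : L} (hw : ∑ j, ‖adjoint (W j) w‖ ^ 2 = ‖w‖ ^ 2) : ∑ j, W j (adjoint (W j) w) = w := by
  have := norm_sub_sum_apply_adjoint_sq hW w
  rw [hw, sub_self, sq_eq_zero_iff, norm_sub_eq_zero_iff] at this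
  exact this.symm

end RowIsometry

section Expansion

variable {n : ℕ} {L : Type*} [NormedAddCommGroup L] [InnerProductSpace ℂ L] [CompleteSpace L]
  {W : Fin n → L →L[ℂ] L}

lemma sum_norm_adjoint_wordProd_sq_le
    (hW : ∀ i j, adjoint (W i) ∘L W j = if i = j then 1 else 0) (m : ℕ) (w : L) :
    ∑ α : Fin m → Fin n, ‖adjoint (wordProd W (List.ofFn α)) w‖ ^ 2 ≤ ‖w‖ ^ 2 := by
  induction m generalizing w with
  | zero => simp [adjoint_wordProd_nil]
  | succ m ih =>
    simp only [Fin.sum_pi_eq_sum_cons, List.ofFn_cons, adjoint_wordProd_cons_apply]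
    exact (Finset.sum_le_sum fun j _ ↦ ih _).trans (sum_norm_adjoint_sq_le hW w)

variable {H : Submodule ℂ L} (hH : ∀ j, ∀ h ∈ H, adjoint (W j) h ∈ H)
  (hHrow : ∀ h ∈ H, ∑ j, W j (adjoint (W j) h) = h)
include hH

lemma adjoint_wordProd_mem (l : List (Fin n)) {h : L} (hh : h ∈ H) :
    adjoint (wordProd W l) h ∈ H := by
  induction l generalizing h with
  | nil => simpa [adjoint_wordProd_nil] using hh
  | cons j l ih => simpa only [adjoint_wordProd_cons_apply] using ih (hH j h hh)

omit hH in
include hHrow in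
lemma inner_eq_sum_inner_adjoint (w : L) {h : L} (hh : h ∈ H) :
    ⟪w, h⟫_ℂ = ∑ j, ⟪adjoint (W j) w, adjoint (W j) h⟫_ℂ := by
  conv_lhs => rw [← hHrow h hh]
  simp only [inner_sum, adjoint_inner_left]

include hHrow in
lemma inner_eq_sum_inner_adjoint_wordProd (m : ℕ) (w : L) {h : L} (hh : h ∈ H) :
    ⟪w, h⟫_ℂ = ∑ α : Fin m → Fin n,
      ⟪adjoint (wordProd W (List.ofFn α)) w, adjoint (wordProd W (List.ofFn α)) h⟫_ℂ := by
  induction m generalizing w h with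
  | zero => simp [adjoint_wordProd_nil]
  | succ m ih =>
    simp only [Fin.sum_pi_eq_sum_cons, List.ofFn_cons, adjoint_wordProd_cons_apply,
      ← ih _ (hH _ h hh)]
    exact inner_eq_sum_inner_adjoint hHrow w hh

end Expansion

section Kernel

variable {n : ℕ} {L : Type*} [NormedAddCommGroup L] [InnerProductSpace ℂ L] [CompleteSpace L]
  {W : Fin n → L →L[ℂ] L}

noncomputable def removeNthKernel (W : Fin n → L →L[ℂ] L) (g : Fin n → L) {m : ℕ}
    (β : Fin (m + 1) → Fin n) (k : Fin (m + 1)) : L :=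
  adjoint (wordProd W (List.ofFn (Fin.removeNth k β))) (g (β k))

@[simp]
lemma removeNthKernel_insertNth (g : Fin n → L) {m : ℕ} (k : Fin (m + 1)) (a : Fin n)
    (γ : Fin m → Fin n) :
    removeNthKernel W g (Fin.insertNth k a γ) k = adjoint (wordProd W (List.ofFn γ)) (g a) := by
  simp [removeNthKernel]

variable {H : Submodule ℂ L} (hH : ∀ j, ∀ h ∈ H, adjoint (W j) h ∈ H)
  (hHrow : ∀ h ∈ H, ∑ j, W j (adjoint (W j) h) = h) {g : Fin n → L} (hg : ∀ a, g a ∈ H)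
include hH hHrow hg

lemma sum_inner_adjoint_wordProd_removeNthKernel {y : L} (hy : y ∈ commPieceSet W) {m : ℕ}
    (k : Fin (m + 1)) :
    ∑ β, ⟪adjoint (wordProd W (List.ofFn β)) y, removeNthKernel W g β k⟫_ℂ =
      ∑ a, ⟪adjoint (W a) y, g a⟫_ℂ := by
  rw [Fin.sum_pi_eq_sum_insertNth k]
  refine Finset.sum_congr rfl fun a _ ↦ ?_
  rw [inner_eq_sum_inner_adjoint_wordProd hH hHrow m _ (hg a)]
  refine Finset.sum_congr rfl fun γ _ ↦ ?_
  rw [removeNthKernel_insertNth, adjoint_wordProd_eq_of_perm (List.perm_ofFn_insertNth k a γ) hy,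
    adjoint_wordProd_cons_apply]

lemma sum_inner_removeNthKernel_self {m : ℕ} (k : Fin (m + 1)) :
    ∑ β, ⟪removeNthKernel W g β k, removeNthKernel W g β k⟫_ℂ = ∑ a, ⟪g a, g a⟫_ℂ := by
  rw [Fin.sum_pi_eq_sum_insertNth k]
  refine Finset.sum_congr rfl fun a _ ↦ ?_
  simp only [removeNthKernel_insertNth, ← inner_eq_sum_inner_adjoint_wordProd hH hHrow m _ (hg a)]

lemma sum_inner_removeNthKernel_of_ne (hHK : ∀ h ∈ H, h ∈ commPieceSet W) {m : ℕ}
    {k l : Fin (m + 2)} (hkl : k ≠ l) :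
    ∑ β, ⟪removeNthKernel W g β k, removeNthKernel W g β l⟫_ℂ =
      ∑ a, ∑ b, ⟪adjoint (W b) (g a), adjoint (W a) (g b)⟫_ℂ := by
  obtain ⟨l', rfl⟩ := Fin.exists_succAbove_eq hkl.symm
  rw [Fin.sum_pi_eq_sum_insertNth k]
  refine Finset.sum_congr rfl fun a _ ↦ ?_
  rw [Fin.sum_pi_eq_sum_insertNth l']
  refine Finset.sum_congr rfl fun b _ ↦ ?_
  rw [inner_eq_sum_inner_adjoint_wordProd hH hHrow m _ (hH a _ (hg b))]
  refine Finset.sum_congr rfl fun δ _ ↦ ?_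
  -- `β` has `a` at `k` and `b` at `l`; its kernels are `W^{δ*} W_b^* g_a` and `W^{δ*} W_a^* g_b`.
  set β : Fin (m + 2) → Fin n := Fin.insertNth k a (Fin.insertNth l' b δ)
  have hβl : β (k.succAbove l') = b := by simp [β]
  have hperm : (List.ofFn (Fin.removeNth (k.succAbove l') β)).Perm (a :: List.ofFn δ) := by
    have h₁ := List.perm_ofFn_cons_removeNth (k.succAbove l') β
    have h₂ := (List.perm_ofFn_insertNth k a _).trans
      ((List.perm_ofFn_insertNth l' b δ).cons a)
    rw [hβl] at h₁
    exact (h₁.symm.trans (h₂.trans (List.Perm.swap b a _))).cons_inv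
  rw [removeNthKernel_insertNth,
    adjoint_wordProd_eq_of_perm (List.perm_ofFn_insertNth l' b δ) (hHK _ (hg a)),
    adjoint_wordProd_cons_apply, removeNthKernel, hβl,
    adjoint_wordProd_eq_of_perm hperm (hHK _ (hg b)), adjoint_wordProd_cons_apply]

lemma sum_norm_sum_removeNthKernel_sq (hHK : ∀ h ∈ H, h ∈ commPieceSet W)
    (hcross : ∑ a, ∑ b, ⟪adjoint (W b) (g a), adjoint (W a) (g b)⟫_ℂ = 0) (m : ℕ) :
    ∑ β : Fin (m + 2) → Fin n, ‖∑ k, removeNthKernel W g β k‖ ^ 2 =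
      (m + 2) * ∑ a, ‖g a‖ ^ 2 := by
  have h_gram : ∀ k l : Fin (m + 2),
      ∑ β, ⟪removeNthKernel W g β k, removeNthKernel W g β l⟫_ℂ =
        if k = l then ∑ a, ⟪g a, g a⟫_ℂ else 0 := by
    intro k l
    split_ifs with hkl
    · subst hkl; exact sum_inner_removeNthKernel_self hH hHrow hg k
    · rw [sum_inner_removeNthKernel_of_ne hH hHrow hg hHK hkl, hcross]
  have h_sum : ∑ β : Fin (m + 2) → Fin n,
      ⟪∑ k, removeNthKernel W g β k, ∑ l, removeNthKernel W g β l⟫_ℂ =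
        (m + 2 : ℕ) • ∑ a, ⟪g a, g a⟫_ℂ := by
    simp only [sum_inner, inner_sum]
    rw [Finset.sum_comm]
    simp only [Finset.sum_comm (γ := Fin (m + 2) → Fin n), h_gram, Finset.sum_ite_eq',
      Finset.mem_univ, if_true, Finset.sum_const, Finset.card_univ, Fintype.card_fin]
  simp only [← inner_self_eq_norm_sq (𝕜 := ℂ), ← map_sum]
  rw [h_sum, map_nsmul, nsmul_eq_mul, map_sum]
  simp only [inner_self_eq_norm_sq]
  push_cast
  ring

lemma norm_sum_inner_adjoint_sq_le (hW : ∀ i j, adjoint (W i) ∘L W j = if i = j then 1 else 0)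
    (hHK : ∀ h ∈ H, h ∈ commPieceSet W)
    (hcross : ∑ a, ∑ b, ⟪adjoint (W b) (g a), adjoint (W a) (g b)⟫_ℂ = 0)
    {y : L} (hy : y ∈ commPieceSet W) (m : ℕ) :
    (m + 2) * ‖∑ a, ⟪adjoint (W a) y, g a⟫_ℂ‖ ^ 2 ≤ ‖y‖ ^ 2 * ∑ a, ‖g a‖ ^ 2 := by
  set Z := ∑ a, ⟪adjoint (W a) y, g a⟫_ℂ
  have h_pair : ∑ β : Fin (m + 2) → Fin n,
      ⟪adjoint (wordProd W (List.ofFn β)) y, ∑ k, removeNthKernel W g β k⟫_ℂ = (m + 2) * Z := by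
    simp only [inner_sum]
    rw [Finset.sum_comm]
    simp only [sum_inner_adjoint_wordProd_removeNthKernel hH hHrow hg hy, Finset.sum_const,
      Finset.card_univ, Fintype.card_fin, nsmul_eq_mul]
    push_cast
    ring
  have h_cs := norm_sum_inner_sq_le (𝕜 := ℂ) Finset.univ
    (fun β : Fin (m + 2) → Fin n ↦ adjoint (wordProd W (List.ofFn β)) y)
    (fun β ↦ ∑ k, removeNthKernel W g β k)
  rw [h_pair, sum_norm_sum_removeNthKernel_sq hH hHrow hg hHK hcross, norm_mul, mul_pow] at h_cs
  have h_norm : ‖((m : ℂ) + 2)‖ = m + 2 := by exact_mod_cast Complex.norm_natCast (m + 2)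
  rw [h_norm] at h_cs
  set c := ∑ a, ‖g a‖ ^ 2
  have h_words := mul_le_mul_of_nonneg_right (sum_norm_adjoint_wordProd_sq_le hW (m + 2) y)
    (by positivity : (0 : ℝ) ≤ (m + 2) * c)
  nlinarith [sq_nonneg ‖Z‖]

lemma sum_inner_adjoint_eq_zero (hW : ∀ i j, adjoint (W i) ∘L W j = if i = j then 1 else 0)
    (hHK : ∀ h ∈ H, h ∈ commPieceSet W)
    (hcross : ∑ a, ∑ b, ⟪adjoint (W b) (g a), adjoint (W a) (g b)⟫_ℂ = 0)
    {y : L} (hy : y ∈ commPieceSet W) :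
    ∑ a, ⟪adjoint (W a) y, g a⟫_ℂ = 0 := by
  by_contra hZ
  have hpos : 0 < ‖∑ a, ⟪adjoint (W a) y, g a⟫_ℂ‖ ^ 2 := by positivity
  obtain ⟨m, hm⟩ :=
    exists_nat_gt ((‖y‖ ^ 2 * ∑ a, ‖g a‖ ^ 2) / ‖∑ a, ⟪adjoint (W a) y, g a⟫_ℂ‖ ^ 2)
  rw [div_lt_iff₀ hpos] at hm
  nlinarith [norm_sum_inner_adjoint_sq_le hH hHrow hg hW hHK hcross hy m]

end Kernel

section CrossTerm

variable {n : ℕ} {L : Type*} [NormedAddCommGroup L] [InnerProductSpace ℂ L] [CompleteSpace L]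
  {W : Fin n → L →L[ℂ] L} {H : Submodule ℂ L} (hH : ∀ j, ∀ h ∈ H, adjoint (W j) h ∈ H)
  (hHrow : ∀ h ∈ H, ∑ j, W j (adjoint (W j) h) = h)
include hH hHrow

lemma sum_inner_adjoint_cross_eq_zero (hHK : ∀ h ∈ H, h ∈ commPieceSet W) {i : Fin n} {u v : L}
    (hu : u ∈ H) (hv : v ∈ H) (h_norm : ⟪adjoint (W i) u, adjoint (W i) u⟫_ℂ = ⟪v, v⟫_ℂ)
    (h_inner : ⟪u, adjoint (W i) v⟫_ℂ = ⟪v, v⟫_ℂ) {g : Fin n → L}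
    (hg : ∀ a, g a = (if a = i then u else 0) - adjoint (W a) v) :
    ∑ a, ∑ b, ⟪adjoint (W b) (g a), adjoint (W a) (g b)⟫_ℂ = 0 := by
  have h_comm : ∀ a b, adjoint (W a) (adjoint (W b) v) = adjoint (W b) (adjoint (W a) v) :=
    adjoint_comm_of_mem_commPieceSet (hHK v hv)
  have h_uu : ∑ a, ∑ b, ⟪adjoint (W b) (if a = i then u else 0),
      adjoint (W a) (if b = i then u else 0)⟫_ℂ = ⟪v, v⟫_ℂ := by
    rw [Fintype.sum_eq_single i fun a ha ↦ by simp [ha],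
      Fintype.sum_eq_single i fun b hb ↦ by simp [hb]]
    simpa using h_norm
  have h_uv : ∑ a, ∑ b, ⟪adjoint (W b) (if a = i then u else 0),
      adjoint (W a) (adjoint (W b) v)⟫_ℂ = ⟪v, v⟫_ℂ := by
    rw [Fintype.sum_eq_single i fun a ha ↦ by simp [ha]]
    simp only [if_true, h_comm i, ← inner_eq_sum_inner_adjoint hHrow u (hH i v hv), h_inner]
  have h_vu : ∑ a, ∑ b, ⟪adjoint (W b) (adjoint (W a) v),
      adjoint (W a) (if b = i then u else 0)⟫_ℂ = ⟪v, v⟫_ℂ := by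
    rw [Finset.sum_comm, Fintype.sum_eq_single i fun b hb ↦ by simp [hb]]
    simp only [if_true, h_comm i, ← inner_eq_sum_inner_adjoint hHrow _ hu]
    rw [← inner_conj_symm, h_inner, inner_conj_symm]
  have h_vv : ∑ a, ∑ b, ⟪adjoint (W b) (adjoint (W a) v),
      adjoint (W a) (adjoint (W b) v)⟫_ℂ = ⟪v, v⟫_ℂ := by
    simp only [← h_comm]
    rw [Finset.sum_comm, inner_eq_sum_inner_adjoint hHrow v hv]
    exact Finset.sum_congr rfl fun a _ ↦ (inner_eq_sum_inner_adjoint hHrow _ (hH a v hv)).symm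
  simp only [hg, map_sub, inner_sub_left, inner_sub_right, Finset.sum_sub_distrib, h_uu, h_uv,
    h_vu, h_vv, sub_self]

end CrossTerm

section Dilation

variable {n : ℕ} {L : Type*} [NormedAddCommGroup L] [InnerProductSpace ℂ L] [CompleteSpace L]
  {H : Submodule ℂ L} [CompleteSpace H] {T : Fin n → H →L[ℂ] H} {W : Fin n → L →L[ℂ] L}
  (hdil : ∀ (i : Fin n) (u : H), adjoint (W i) (u : L) = ((adjoint (T i)) u : L))
include hdil

lemma adjoint_mem_of_dilation (j : Fin n) {h : L} (hh : h ∈ H) : adjoint (W j) h ∈ H := by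
  simpa only [hdil j ⟨h, hh⟩] using (adjoint (T j) ⟨h, hh⟩).2

lemma sum_apply_adjoint_eq_self_of_dilation
    (hW : ∀ i j, adjoint (W i) ∘L W j = if i = j then 1 else 0)
    (hsum : ∑ i, T i ∘L adjoint (T i) = 1) {h : L} (hh : h ∈ H) :
    ∑ j, W j (adjoint (W j) h) = h := by
  refine sum_apply_adjoint_eq_self hW ?_
  simpa only [hdil _ ⟨h, hh⟩, Submodule.coe_norm] using
    sum_norm_adjoint_sq_eq_of_sum_eq_one hsum ⟨h, hh⟩

lemma mem_commPieceSet_of_dilation (hcomm : ∀ i j, T i ∘L T j = T j ∘L T i) {h : L}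
    (hh : h ∈ H) : h ∈ commPieceSet W := by
  intro i j α
  lift adjoint (wordProd W α) h to H using
    adjoint_wordProd_mem (fun j _ ↦ adjoint_mem_of_dilation hdil j) α hh with u
  simp only [hdil, adjoint_apply_comm_of_comp_comm (hcomm i j)]

lemma adjoint_mem_orthogonal_of_mem_commPieceSet
    (hW : ∀ i j, adjoint (W i) ∘L W j = if i = j then 1 else 0)
    (hsum : ∑ i, T i ∘L adjoint (T i) = 1) (hcomm : ∀ i j, T i ∘L T j = T j ∘L T i)
    (hnormal : ∀ i, T i ∘L adjoint (T i) = adjoint (T i) ∘L T i)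
    {y : L} (hy : y ∈ commPieceSet W) (hyH : y ∈ Hᗮ) (i : Fin n) : adjoint (W i) y ∈ Hᗮ := by
  have hH := fun j h ↦ adjoint_mem_of_dilation hdil (h := h) j
  have hHrow := fun h ↦ sum_apply_adjoint_eq_self_of_dilation hdil hW hsum (h := h)
  have hHK := fun h ↦ mem_commPieceSet_of_dilation hdil hcomm (h := h)
  rw [Submodule.mem_orthogonal']
  intro u hu
  set v : H := T i ⟨u, hu⟩
  have h_norm : ⟪adjoint (W i) u, adjoint (W i) u⟫_ℂ = ⟪(v : L), v⟫_ℂ := by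
    rw [hdil i ⟨u, hu⟩, ← Submodule.coe_inner, ← Submodule.coe_inner, adjoint_inner_left,
      ← comp_apply, hnormal, comp_apply, adjoint_inner_right]
  have h_inner : ⟪u, adjoint (W i) v⟫_ℂ = ⟪(v : L), v⟫_ℂ := by
    rw [hdil, ← Submodule.coe_mk u hu, ← Submodule.coe_inner, ← Submodule.coe_inner,
      adjoint_inner_right]
  set g : Fin n → L := fun a ↦ (if a = i then u else 0) - adjoint (W a) v
  have hg : ∀ a, g a ∈ H := fun a ↦
    H.sub_mem (by split_ifs <;> simp [hu]) (hH a _ v.2)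
  have hZ := sum_inner_adjoint_eq_zero hH hHrow hg hW hHK
    (sum_inner_adjoint_cross_eq_zero hH hHrow hHK hu v.2 h_norm h_inner fun _ ↦ rfl) hy
  simp only [g, inner_sub_right, Finset.sum_sub_distrib,
    ← inner_eq_sum_inner_adjoint hHrow y v.2, Submodule.inner_left_of_mem_orthogonal v.2 hyH,
    sub_zero] at hZ
  rwa [Fintype.sum_eq_single i fun a ha ↦ by simp [ha], if_pos rfl] at hZ

lemma adjoint_wordProd_mem_orthogonal
    (hW : ∀ i j, adjoint (W i) ∘L W j = if i = j then 1 else 0)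
    (hsum : ∑ i, T i ∘L adjoint (T i) = 1) (hcomm : ∀ i j, T i ∘L T j = T j ∘L T i)
    (hnormal : ∀ i, T i ∘L adjoint (T i) = adjoint (T i) ∘L T i)
    (α : List (Fin n)) {y : L} (hy : y ∈ commPieceSet W) (hyH : y ∈ Hᗮ) :
    adjoint (wordProd W α) y ∈ Hᗮ := by
  induction α generalizing y with
  | nil => simpa [adjoint_wordProd_nil] using hyH
  | cons j α ih =>
    rw [adjoint_wordProd_cons_apply]
    exact ih (adjoint_mem_commPieceSet hy j)
      (adjoint_mem_orthogonal_of_mem_commPieceSet hdil hW hsum hcomm hnormal hy hyH j)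

end Dilation

section Minimality

variable {n : ℕ} {L : Type*} [NormedAddCommGroup L] [InnerProductSpace ℂ L]
  {H : Submodule ℂ L} {W : Fin n → L →L[ℂ] L}

lemma eq_zero_of_forall_inner_wordProd
    (hmin : (Submodule.span ℂ {x : L | ∃ (α : List (Fin n)) (u : H),
      x = wordProd W α (u : L)}).topologicalClosure = ⊤)
    {y : L} (hy : ∀ (α : List (Fin n)) (u : H), ⟪y, wordProd W α u⟫_ℂ = 0) : y = 0 := by
  have hle : Submodule.span ℂ {x : L | ∃ (α : List (Fin n)) (u : H), x = wordProd W α (u : L)}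
      ≤ (ℂ ∙ y)ᗮ := by
    rw [Submodule.span_le]
    rintro _ ⟨α, u, rfl⟩
    exact Submodule.mem_orthogonal_singleton_iff_inner_right.2 (hy α u)
  have hy_perp : y ∈ (ℂ ∙ y)ᗮ := by
    refine Submodule.topologicalClosure_minimal _ hle (Submodule.isClosed_orthogonal _) ?_
    rw [hmin]
    trivial
  exact inner_self_eq_zero.1 (Submodule.mem_orthogonal_singleton_iff_inner_right.1 hy_perp)

end Minimality

theorem stmt8_general {n : ℕ} {L : Type*} [NormedAddCommGroup L]
    [InnerProductSpace ℂ L] [CompleteSpace L]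
    (H : Submodule ℂ L) [CompleteSpace H]
    (T : Fin n → H →L[ℂ] H)
    (hcomm : ∀ i j : Fin n, T i ∘L T j = T j ∘L T i)
    (hnormal : ∀ i : Fin n, T i ∘L adjoint (T i) = adjoint (T i) ∘L T i)
    (hsum : ∑ i : Fin n, T i ∘L adjoint (T i) = 1)
    (W : Fin n → L →L[ℂ] L)
    (hisom : ∀ i j : Fin n, adjoint (W i) ∘L W j = if i = j then 1 else 0)
    (hdil : ∀ (i : Fin n) (u : H), adjoint (W i) (u : L) = ((adjoint (T i)) u : L))
    (hmin : (Submodule.span ℂ {x : L | ∃ (α : List (Fin n)) (u : H),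
      x = wordProd W α (u : L)}).topologicalClosure = ⊤) :
    commPieceSet W = (H : Set L) := by
  refine Set.Subset.antisymm (fun x hx ↦ ?_) fun h ↦ mem_commPieceSet_of_dilation hdil hcomm
  have hPx : H.starProjection x ∈ H := H.starProjection_apply_mem x
  set y := x - H.starProjection x with hy_def
  have hy : y ∈ commPieceSet W :=
    sub_mem_commPieceSet hx (mem_commPieceSet_of_dilation hdil hcomm hPx)
  have hyH : y ∈ Hᗮ := H.sub_starProjection_mem_orthogonal x
  have hy0 : y = 0 := eq_zero_of_forall_inner_wordProd hmin fun α u ↦ by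
    rw [← adjoint_inner_left]
    exact Submodule.inner_left_of_mem_orthogonal u.2
      (adjoint_wordProd_mem_orthogonal hdil hisom hsum hcomm hnormal α hy hyH)
  rw [hy_def, sub_eq_zero] at hy0
  exact hy0 ▸ hPx

/-- if `T` is a spherical unitary on `H` and `W` is a minimal isometric
dilation of `T` on `L ⊇ H`, then the maximal commuting piece space of `W` is `H`. -/
theorem stmt8 {n : ℕ} (hn : 1 ≤ n) {L : Type*} [NormedAddCommGroup L]
    [InnerProductSpace ℂ L] [CompleteSpace L]
    (H : Submodule ℂ L) [CompleteSpace H]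
    (T : Fin n → H →L[ℂ] H)
    (hcomm : ∀ i j : Fin n, T i ∘L T j = T j ∘L T i)
    (hnormal : ∀ i : Fin n, T i ∘L adjoint (T i) = adjoint (T i) ∘L T i)
    (hsum : ∑ i : Fin n, T i ∘L adjoint (T i) = 1)
    (W : Fin n → L →L[ℂ] L)
    (hisom : ∀ i j : Fin n, adjoint (W i) ∘L W j = if i = j then 1 else 0)
    (hdil : ∀ (i : Fin n) (u : H), adjoint (W i) (u : L) = ((adjoint (T i)) u : L))
    (hmin : (Submodule.span ℂ {x : L | ∃ (α : List (Fin n)) (u : H),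
      x = wordProd W α (u : L)}).topologicalClosure = ⊤) :
    commPieceSet W = (H : Set L) :=
  stmt8_general H T hcomm hnormal hsum W hisom hdil hmin
end

section
/- Let n ≥ 1 and let T = (T_1,…,T_n) be a commuting tuple of bounded operators on a complex Hilbert space H satisfying T_1 T_1^* + ⋯ + T_n T_n^* = I. Let H be a closed subspace of a complex Hilbert space L and let W = (W_1,…,W_n) be a minimal isometric dilation of T: W_i^* W_j = δ_{ij} I, W_i^* u = T_i^* u for all u ∈ H and all i, and the closed linear span of {W^α u : u ∈ H, α a word} is L. Then the closed linear span of {W^α x : x ∈ L^c(W), α a word} is all of L (i.e. the associated representation of the Cuntz algebra is spherical). -/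
open ContinuousLinearMap

/-- if `T` is a commuting tuple with `Σ T_i T_i^* = I` and `W` is a
minimal isometric dilation of `T`, then the closed span of `{W^α x : x ∈ L^c(W)}`
is all of `L` (the associated Cuntz algebra representation is spherical). -/
theorem stmt10 {n : ℕ} (hn : 1 ≤ n) {L : Type*} [NormedAddCommGroup L]
    [InnerProductSpace ℂ L] [CompleteSpace L]
    (H : Submodule ℂ L) [CompleteSpace H]
    (T : Fin n → H →L[ℂ] H)
    (hcomm : ∀ i j : Fin n, T i ∘L T j = T j ∘L T i)
    (hsum : ∑ i : Fin n, T i ∘L adjoint (T i) = 1)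
    (W : Fin n → L →L[ℂ] L)
    (hisom : ∀ i j : Fin n, adjoint (W i) ∘L W j = if i = j then 1 else 0)
    (hdil : ∀ (i : Fin n) (u : H), adjoint (W i) (u : L) = ((adjoint (T i)) u : L))
    (hmin : (Submodule.span ℂ {x : L | ∃ (α : List (Fin n)) (u : H),
      x = wordProd W α (u : L)}).topologicalClosure = ⊤) :
    (Submodule.span ℂ {x : L | ∃ (α : List (Fin n)) (y : L),
      y ∈ commPieceSet W ∧ x = wordProd W α y}).topologicalClosure = ⊤ := by
  have key : ∀ (α : List (Fin n)) (u : H), ∃ v : H,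
      adjoint (wordProd W α) (u : L) = (v : L) := by
    intro α
    induction α with
    | nil => exact fun u => ⟨u, by simp [wordProd, one_def, adjoint_id]⟩
    | cons a α ih =>
      intro u
      have h1 : wordProd W (a :: α) = W a ∘L wordProd W α := by
        simp [wordProd, List.prod_cons]; rfl
      have : adjoint (wordProd W (a :: α)) (u : L)
          = adjoint (wordProd W α) (adjoint (W a) (u : L)) := by
        rw [h1, adjoint_comp]; rfl
      rw [this, hdil]
      exact ih _
  have hHc : ∀ u : H, (u : L) ∈ commPieceSet W := by
    intro u i j α
    obtain ⟨v, hv⟩ := key α u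
    have hc : adjoint (T i) (adjoint (T j) v) = adjoint (T j) (adjoint (T i) v) := by
      have h := congrArg adjoint (hcomm j i)
      rw [adjoint_comp, adjoint_comp] at h
      exact DFunLike.congr_fun h v
    rw [hv, hdil, hdil, hdil, hdil, hc]
  have hsub : {x : L | ∃ (α : List (Fin n)) (u : H), x = wordProd W α (u : L)}
      ⊆ {x : L | ∃ (α : List (Fin n)) (y : L),
        y ∈ commPieceSet W ∧ x = wordProd W α y} := by
    rintro x ⟨α, u, rfl⟩
    exact ⟨α, (u : L), hHc u, rfl⟩
  have hmono : (Submodule.span ℂ {x : L | ∃ (α : List (Fin n)) (u : H),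
        x = wordProd W α (u : L)}).topologicalClosure ≤
      (Submodule.span ℂ {x : L | ∃ (α : List (Fin n)) (y : L),
        y ∈ commPieceSet W ∧ x = wordProd W α y}).topologicalClosure :=
    Submodule.topologicalClosure_mono (Submodule.span_mono hsub)
  rw [hmin] at hmono
  exact le_antisymm le_top hmono
end

section
/- Let H be a finite-dimensional complex inner product space and let T_1,…,T_n be commuting linear operators on H satisfying T_1 T_1^* + ⋯ + T_n T_n^* = I. Then each T_i is normal (T_i T_i^* = T_i^* T_i), i.e. (T_1,…,T_n) is a spherical unitary. -/
/-!
Write `S i` for the adjoint of `T i`; the `S i` commute and `∑ ‖S i x‖² = ‖x‖²`. If `v ≠ 0`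
satisfies `S i v = μ i • v` for all `i`, then `∑ ‖μ i‖² = 1` and `∑ μ i • T i v = v`. Since the
`T i` commute, `c = T j v - conj (μ j) • v` also satisfies `∑ μ i • T i c = c`, and expanding
`∑ ‖S i c - μ i • c‖²` shows that this sum vanishes, so `S j c = μ j • c` and
`‖c‖² = ⟪S j c, v⟫ - conj (μ j) ⟪c, v⟫ = 0`. Thus each `T j` acts on a joint eigenspace of the
`S i` by the scalar `conj (μ j)`, and there it commutes with `S j`. The span of the joint
eigenspaces is then invariant under the `T i`, so its orthogonal complement is invariant under
the `S i`; a common eigenvector of the `S i` there is impossible, so the joint eigenspaces span.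
-/

open ContinuousLinearMap

open scoped ComplexConjugate InnerProductSpace

namespace Module.End

variable {K V ι : Type*} [Field K] [AddCommGroup V] [Module K V]

def jointEigenspace (A : ι → End K V) (μ : ι → K) : Submodule K V :=
  ⨅ i, (A i).eigenspace (μ i)

theorem mem_jointEigenspace {A : ι → End K V} {μ : ι → K} {v : V} :
    v ∈ jointEigenspace A μ ↔ ∀ i, A i v = μ i • v := by
  simp only [jointEigenspace, Submodule.mem_iInf, mem_eigenspace_iff]

theorem exists_common_eigenvector_of_commute [IsAlgClosed K] [FiniteDimensional K V]
    (A : ι → End K V) (hcomm : ∀ i j, Commute (A i) (A j)) (W : Submodule K V) (hW : W ≠ ⊥)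
    (hinv : ∀ i, ∀ x ∈ W, A i x ∈ W) :
    ∃ v ∈ W, v ≠ 0 ∧ ∃ μ : ι → K, ∀ i, A i v = μ i • v := by
  induction hd : Module.finrank K W using Nat.strong_induction_on generalizing W with
  | _ d ih =>
  by_cases hscalar : ∀ i, ∃ c : K, ∀ w ∈ W, A i w = c • w
  · choose μ hμ using hscalar
    obtain ⟨v, hv, hv0⟩ := W.ne_bot_iff.mp hW
    exact ⟨v, hv, hv0, μ, fun i => hμ i v hv⟩
  -- Otherwise shrink `W` to an eigenspace of a non-scalar `A i`, which is still invariant.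
  push Not at hscalar
  obtain ⟨i, hi⟩ := hscalar
  have : Nontrivial W := Submodule.nontrivial_iff_ne_bot.mpr hW
  obtain ⟨c, hc⟩ := exists_eigenvalue ((A i).restrict (hinv i))
  obtain ⟨w, hw⟩ := hc.exists_hasEigenvector
  obtain ⟨u, huW, hu⟩ := hi c
  let W' := W ⊓ (A i).eigenspace c
  have hW'_bot : W' ≠ ⊥ := by
    refine W'.ne_bot_iff.mpr ⟨w, ⟨w.2, ?_⟩, by simpa using hw.2⟩
    simpa [mem_eigenspace_iff, Subtype.ext_iff] using hw.apply_eq_smul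
  have hW'_lt : W' < W :=
    lt_of_le_of_ne inf_le_left fun h => hu (mem_eigenspace_iff.mp (h ▸ huW : u ∈ W').2)
  have hW'_inv : ∀ j, ∀ x ∈ W', A j x ∈ W' := by
    rintro j x ⟨hxW, hx⟩
    refine ⟨hinv j x hxW, ?_⟩
    rw [SetLike.mem_coe, mem_eigenspace_iff] at hx ⊢
    rw [← mul_apply, (hcomm i j).eq, mul_apply, hx, map_smul]
  obtain ⟨v, hv, hv0, μ, hμ⟩ :=
    ih _ (hd ▸ Submodule.finrank_lt_finrank_of_lt hW'_lt) W' hW'_bot hW'_inv rfl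
  exact ⟨v, hv.1, hv0, μ, hμ⟩

end Module.End

namespace ContinuousLinearMap

variable {𝕜 H ι : Type*} [RCLike 𝕜] [NormedAddCommGroup H] [InnerProductSpace 𝕜 H]
  [CompleteSpace H] [Fintype ι] {T : ι → H →L[𝕜] H}

theorem sum_norm_adjoint_apply_sq (hsum : ∑ i, T i ∘L adjoint (T i) = 1) (x : H) :
    ∑ i, ‖adjoint (T i) x‖ ^ 2 = ‖x‖ ^ 2 := by
  simp_rw [apply_norm_sq_eq_inner_adjoint_right, adjoint_adjoint, ← map_sum RCLike.re,
    ← inner_sum]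
  rw [← _root_.sum_apply Finset.univ (fun i => T i ∘L adjoint (T i)) x, hsum, one_apply_eq_self,
    inner_self_eq_norm_sq]

theorem sum_norm_sq_eq_one_of_adjoint_apply_eq_smul (hsum : ∑ i, T i ∘L adjoint (T i) = 1)
    {μ : ι → 𝕜} {v : H} (hv : v ≠ 0) (hμ : ∀ i, adjoint (T i) v = μ i • v) :
    ∑ i, ‖μ i‖ ^ 2 = 1 := by
  have h := sum_norm_adjoint_apply_sq hsum v
  simp_rw [hμ, norm_smul, mul_pow, ← Finset.sum_mul] at h
  exact (mul_eq_right₀ (by positivity)).mp h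

theorem adjoint_apply_eq_smul_of_sum_smul_apply_eq (hsum : ∑ i, T i ∘L adjoint (T i) = 1)
    {μ : ι → 𝕜} (hμ : ∑ i, ‖μ i‖ ^ 2 = 1) {c : H} (hc : ∑ i, μ i • T i c = c) (i : ι) :
    adjoint (T i) c = μ i • c := by
  have hcross : ∑ i, RCLike.re ⟪adjoint (T i) c, μ i • c⟫_𝕜 = ‖c‖ ^ 2 := by
    simp_rw [inner_smul_right, adjoint_inner_left, ← inner_smul_right, ← map_sum RCLike.re,
      ← inner_sum, hc, ← inner_self_eq_norm_sq (𝕜 := 𝕜)]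
  have hzero : ∑ i, ‖adjoint (T i) c - μ i • c‖ ^ 2 = 0 := by
    simp_rw [norm_sub_sq (𝕜 := 𝕜), Finset.sum_add_distrib, Finset.sum_sub_distrib,
      ← Finset.mul_sum, hcross, sum_norm_adjoint_apply_sq hsum, norm_smul, mul_pow,
      ← Finset.sum_mul, hμ]
    ring
  rw [Finset.sum_eq_zero_iff_of_nonneg fun i _ => by positivity] at hzero
  simpa [sub_eq_zero] using hzero i (Finset.mem_univ i)

theorem apply_eq_conj_smul_of_adjoint_apply_eq_smul (hcomm : ∀ i j, T i ∘L T j = T j ∘L T i)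
    (hsum : ∑ i, T i ∘L adjoint (T i) = 1) {μ : ι → 𝕜} {v : H}
    (hμ : ∀ i, adjoint (T i) v = μ i • v) (j : ι) :
    T j v = conj (μ j) • v := by
  rcases eq_or_ne v 0 with rfl | hv
  · simp
  have hv_fix : ∑ i, μ i • T i v = v := by
    simpa [hμ] using congrArg (· v) hsum
  set c := T j v - conj (μ j) • v with hc_def
  have hc_fix : ∑ i, μ i • T i c = c := by
    have hTT : ∀ i, T i (T j v) = T j (T i v) := fun i => congrArg (· v) (hcomm i j)
    simp_rw [hc_def, map_sub, map_smul, hTT, smul_sub, Finset.sum_sub_distrib, smul_comm (μ _),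
      ← Finset.smul_sum, hv_fix]
    simpa [map_sum] using congrArg (T j) hv_fix
  have hc := adjoint_apply_eq_smul_of_sum_smul_apply_eq hsum
    (sum_norm_sq_eq_one_of_adjoint_apply_eq_smul hsum hv hμ) hc_fix j
  have hcc : ⟪c, T j v - conj (μ j) • v⟫_𝕜 = 0 := by
    rw [inner_sub_right, inner_smul_right, ← adjoint_inner_left, hc, inner_smul_left, sub_self]
  exact sub_eq_zero.mp (inner_self_eq_zero.mp hcc)

theorem iSup_jointEigenspace_adjoint_eq_top [IsAlgClosed 𝕜] [FiniteDimensional 𝕜 H]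
    (hcomm : ∀ i j, T i ∘L T j = T j ∘L T i) (hsum : ∑ i, T i ∘L adjoint (T i) = 1) :
    ⨆ μ, Module.End.jointEigenspace (fun i => (adjoint (T i) : H →ₗ[𝕜] H)) μ = ⊤ := by
  set N := ⨆ μ, Module.End.jointEigenspace (fun i => (adjoint (T i) : H →ₗ[𝕜] H)) μ
  have hN_inv : ∀ j, N ≤ N.comap (T j : H →ₗ[𝕜] H) := fun j => iSup_le fun μ v hv => by
    have hμ := Module.End.mem_jointEigenspace.mp hv
    rw [Submodule.mem_comap, coe_coe, apply_eq_conj_smul_of_adjoint_apply_eq_smul hcomm hsum hμ]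
    exact N.smul_mem _ (Submodule.mem_iSup_of_mem μ hv)
  have hNperp_inv : ∀ j, ∀ x ∈ Nᗮ, adjoint (T j) x ∈ Nᗮ := fun j x hx u hu => by
    rw [adjoint_inner_right, hx _ (by exact hN_inv j hu)]
  have hadj_comm : ∀ i j, Commute (adjoint (T i) : H →ₗ[𝕜] H) (adjoint (T j)) := by
    intro i j
    have h := congrArg adjoint (hcomm j i)
    rw [adjoint_comp, adjoint_comp] at h
    exact LinearMap.ext fun x => congrArg (· x) h
  rw [← Submodule.orthogonal_eq_bot_iff]
  by_contra hne
  obtain ⟨v, hv, hv0, μ, hμ⟩ := Module.End.exists_common_eigenvector_of_commute _ hadj_comm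
    Nᗮ hne hNperp_inv
  have hvN : v ∈ N := Submodule.mem_iSup_of_mem μ (Module.End.mem_jointEigenspace.mpr hμ)
  exact hv0 ((Submodule.mem_bot 𝕜).mp (N.inf_orthogonal_eq_bot ▸ ⟨hvN, hv⟩))

end ContinuousLinearMap

/-- a commuting tuple of operators on a finite-dimensional complex inner
product space with `Σ T_i T_i^* = I` consists of normal operators, i.e. it is a
spherical unitary. -/
theorem stmt14 {n : ℕ} {H : Type*} [NormedAddCommGroup H] [InnerProductSpace ℂ H]
    [FiniteDimensional ℂ H]
    (T : Fin n → H →L[ℂ] H)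
    (hcomm : ∀ i j : Fin n, T i ∘L T j = T j ∘L T i)
    (hsum : ∑ i : Fin n, T i ∘L adjoint (T i) = 1) :
    ∀ i : Fin n, T i ∘L adjoint (T i) = adjoint (T i) ∘L T i := by
  intro i
  have hnormal_on_eigenspace : ∀ μ,
      Module.End.jointEigenspace (fun j => (adjoint (T j) : H →ₗ[ℂ] H)) μ ≤
        (T i ∘L adjoint (T i) - adjoint (T i) ∘L T i).ker := by
    intro μ v hv
    have hμ : ∀ j, adjoint (T j) v = μ j • v := Module.End.mem_jointEigenspace.mp hv
    simp [hμ, apply_eq_conj_smul_of_adjoint_apply_eq_smul hcomm hsum hμ, smul_smul, mul_comm]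
  have hker := iSup_le hnormal_on_eigenspace
  rw [iSup_jointEigenspace_adjoint_eq_top hcomm hsum, top_le_iff, LinearMap.ker_eq_top] at hker
  ext x
  simpa [sub_eq_zero] using congrArg (· x) hker
end

section
/- Let n ≥ 1, let T = (T_1,…,T_n) be bounded operators (not necessarily commuting) on a complex Hilbert space H with T_1 T_1^* + ⋯ + T_n T_n^* = I. Let H be a closed subspace of a complex Hilbert space L and let W = (W_1,…,W_n) be a minimal isometric dilation of T: W_i^* W_j = δ_{ij} I, W_i^* u = T_i^* u for all u ∈ H and all i, and the closed linear span of {W^α u : u ∈ H, α a word} is L. Then W_1 W_1^* + ⋯ + W_n W_n^* = I, i.e. the W_i satisfy the Cuntz relations. -/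
open ContinuousLinearMap
local notation "⟪" x ", " y "⟫_ℂ" => @inner ℂ _ _ x y

/-- if `Σ T_i T_i^* = I` and `W` is a minimal isometric dilation of `T`,
then `Σ W_i W_i^* = I`, i.e. the `W_i` satisfy the Cuntz relations. -/
theorem stmt15 {n : ℕ} (hn : 1 ≤ n) {L : Type*} [NormedAddCommGroup L]
    [InnerProductSpace ℂ L] [CompleteSpace L]
    (H : Submodule ℂ L) [CompleteSpace H]
    (T : Fin n → H →L[ℂ] H)
    (hsum : ∑ i : Fin n, T i ∘L adjoint (T i) = 1)
    (W : Fin n → L →L[ℂ] L)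
    (hisom : ∀ i j : Fin n, adjoint (W i) ∘L W j = if i = j then 1 else 0)
    (hdil : ∀ (i : Fin n) (u : H), adjoint (W i) (u : L) = ((adjoint (T i)) u : L))
    (hmin : (Submodule.span ℂ {x : L | ∃ (α : List (Fin n)) (u : H),
      x = wordProd W α (u : L)}).topologicalClosure = ⊤) :
    ∑ i : Fin n, W i ∘L adjoint (W i) = 1 := by
  have hWW : ∀ (i j : Fin n) (x y : L),
      ⟪W i x, W j y⟫_ℂ = if i = j then ⟪x, y⟫_ℂ else 0 := by
    intro i j x y
    have : ⟪W i x, W j y⟫_ℂ = ⟪x, (adjoint (W i) ∘L W j) y⟫_ℂ := by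
      simp [ContinuousLinearMap.comp_apply, ContinuousLinearMap.adjoint_inner_right]
    rw [this, hisom i j]
    by_cases h : i = j <;> simp [h]
  have key : ∀ u : H, (∑ i : Fin n, W i ∘L adjoint (W i)) (u : L) = u := by
    intro u
    set a : Fin n → L := fun i => ((adjoint (T i)) u : L) with ha
    set v : L := ∑ i, W i (a i) with hv
    have hPu : (∑ i : Fin n, W i ∘L adjoint (W i)) (u : L) = v := by
      simp [hv, ContinuousLinearMap.sum_apply, hdil, ha]
    have hTsum : (∑ i, T i ((adjoint (T i)) u)) = u := by
      have := congrArg (fun f => f u) hsum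
      simpa using this
    have hc : ∑ i, ⟪a i, a i⟫_ℂ = ⟪(u:L), (u:L)⟫_ℂ := by
      have h1 : ∀ i, ⟪a i, a i⟫_ℂ = ⟪(adjoint (T i)) u, (adjoint (T i)) u⟫_ℂ := by
        intro i; rw [ha]; exact (Submodule.coe_inner H _ _).symm
      have h2 : ∀ i, ⟪(adjoint (T i)) u, (adjoint (T i)) u⟫_ℂ
          = ⟪u, T i ((adjoint (T i)) u)⟫_ℂ := by
        intro i; rw [ContinuousLinearMap.adjoint_inner_left]
      calc ∑ i, ⟪a i, a i⟫_ℂ = ∑ i, ⟪u, T i ((adjoint (T i)) u)⟫_ℂ := by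
            simp_rw [fun i => (h1 i).trans (h2 i)]
        _ = ⟪u, ∑ i, T i ((adjoint (T i)) u)⟫_ℂ := (inner_sum _ _ _).symm
        _ = ⟪u, u⟫_ℂ := by rw [hTsum]
        _ = ⟪(u:L), (u:L)⟫_ℂ := Submodule.coe_inner H u u
    have hvu : ⟪v, (u:L)⟫_ℂ = ⟪(u:L), (u:L)⟫_ℂ := by
      rw [hv, sum_inner, ← hc]
      refine Finset.sum_congr rfl fun i _ => ?_
      rw [← ContinuousLinearMap.adjoint_inner_right, hdil i u]
    have huv : ⟪(u:L), v⟫_ℂ = ⟪(u:L), (u:L)⟫_ℂ := by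
      rw [hv, inner_sum, ← hc]
      refine Finset.sum_congr rfl fun i _ => ?_
      rw [← ContinuousLinearMap.adjoint_inner_left, hdil i u]
    have hvv : ⟪v, v⟫_ℂ = ⟪(u:L), (u:L)⟫_ℂ := by
      rw [hv, sum_inner, ← hc]
      refine Finset.sum_congr rfl fun i _ => ?_
      rw [inner_sum]
      simp_rw [hWW]
      simp
    have hzero : ⟪v - (u:L), v - (u:L)⟫_ℂ = 0 := by
      rw [inner_sub_sub_self, hvv, hvu, huv]
      ring
    have : v - (u:L) = 0 := inner_self_eq_zero.mp hzero
    rw [hPu, sub_eq_zero.mp this]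
  -- P agrees with 1 on the spanning set
  have heq : Set.EqOn ⇑(∑ i : Fin n, W i ∘L adjoint (W i)) ⇑(1 : L →L[ℂ] L)
      {x : L | ∃ (α : List (Fin n)) (u : H), x = wordProd W α (u : L)} := by
    rintro x ⟨α, u, rfl⟩
    show (∑ i : Fin n, W i ∘L adjoint (W i)) (wordProd W α (u : L)) = wordProd W α (u : L)
    match α with
    | [] => simpa [wordProd] using key u
    | i :: β =>
      have hα : wordProd W (i :: β) (u : L) = W i (wordProd W β (u : L)) := by
        simp [wordProd, ContinuousLinearMap.mul_apply]
      rw [hα, ContinuousLinearMap.sum_apply]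
      simp only [ContinuousLinearMap.comp_apply]
      have : ∀ j : Fin n, W j (adjoint (W j) (W i (wordProd W β (u : L))))
          = if j = i then W i (wordProd W β (u : L)) else 0 := by
        intro j
        have h2 : adjoint (W j) (W i (wordProd W β (u : L)))
            = (if j = i then (1 : L →L[ℂ] L) else 0) (wordProd W β (u : L)) := by
          rw [← hisom j i]; rfl
        rw [h2]
        by_cases h : j = i
        · subst h; simp
        · simp [h]
      simp_rw [this]
      simp
  have hdense : Dense ((Submodule.span ℂ {x : L | ∃ (α : List (Fin n)) (u : H),
      x = wordProd W α (u : L)}) : Set L) := by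
    rw [← Submodule.dense_iff_topologicalClosure_eq_top] at hmin
    exact hmin
  exact ContinuousLinearMap.ext_on hdense heq
end

section
/- Let w = (w_1,…,w_n) ∈ ℂⁿ with |w_1|² + ⋯ + |w_n|² = 1 (a point of the unit sphere ∂B_n). Let L be a complex Hilbert space, e ∈ L a unit vector, and W_1,…,W_n bounded operators on L with W_i^* W_j = δ_{ij} I, W_i^* e = \overline{w_i} e for all i, and such that the closed linear span of {W^α e : α a word} is L (i.e. W is a minimal isometric dilation of the one-dimensional tuple (w_1,…,w_n)). Then the tuple W acts irreducibly: the only closed subspaces N of L with W_i N ⊆ N and W_i^* N ⊆ N for all i are N = {0} and N = L. -/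
open ContinuousLinearMap

/-!
The orthogonal projection `P` onto a closed subspace `N` reducing every `W i` commutes with the
`(W i)†`, so `P e` is, like `e`, a common eigenvector of the `(W i)†` with eigenvalues `conj (w i)`.
Such an eigenvector `x` is a multiple of `e`: `x - ⟪e, x⟫ e` is orthogonal to `e`, and hence to
every `W^α e`, which span a dense subspace. So either `P e = 0` or `e ∈ N`, and as `e` is cyclic
for `W` this forces `N = ⊥` (via `Nᗮ`, which is also invariant) or `N = ⊤`.
-/

open Submodule

namespace Submodule

variable {𝕜 E : Type*} [RCLike 𝕜] [NormedAddCommGroup E] [InnerProductSpace 𝕜 E]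

theorem mapsTo_adjoint_orthogonal [CompleteSpace E] {K : Submodule 𝕜 E} {T : E →L[𝕜] E}
    (hK : Set.MapsTo T K K) : Set.MapsTo (adjoint T) Kᗮ Kᗮ := by
  intro x hx
  rw [SetLike.mem_coe, mem_orthogonal]
  intro u hu
  rw [adjoint_inner_right]
  exact hx _ (hK hu)

theorem commute_starProjection_of_mapsTo {K : Submodule 𝕜 E} [K.HasOrthogonalProjection]
    {T : E →L[𝕜] E} (hK : Set.MapsTo T K K) (hKo : Set.MapsTo T Kᗮ Kᗮ) :
    Commute K.starProjection T := by
  ext x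
  change K.starProjection (T x) = T (K.starProjection x)
  refine eq_starProjection_of_mem_orthogonal' (hK (K.starProjection_apply_mem x))
    (hKo (K.sub_starProjection_mem_orthogonal x)) ?_
  rw [← map_add, add_sub_cancel]

end Submodule

section WordProd

variable {n : ℕ} {L : Type*} [NormedAddCommGroup L] [InnerProductSpace ℂ L]
  (R : Fin n → L →L[ℂ] L)

def wordOrbit (e : L) : Set L := {x | ∃ α : List (Fin n), x = wordProd R α e}

theorem wordProd_nil : wordProd R [] = 1 := rfl

theorem wordProd_cons_apply (i : Fin n) (α : List (Fin n)) (x : L) :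
    wordProd R (i :: α) x = R i (wordProd R α x) := by
  simp [wordProd]

variable {R}

theorem span_wordOrbit_le {M : Submodule ℂ L} {e : L} (he : e ∈ M)
    (hM : ∀ i, Set.MapsTo (R i) M M) : span ℂ (wordOrbit R e) ≤ M := by
  rw [span_le]
  rintro _ ⟨α, rfl⟩
  induction α with
  | nil => simpa [wordProd_nil] using he
  | cons i α ih => rw [wordProd_cons_apply]; exact hM i ih

theorem eq_top_of_mem_of_dense_span_wordOrbit {e : L}
    (hdense : (span ℂ (wordOrbit R e)).topologicalClosure = ⊤) {M : Submodule ℂ L}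
    (hMc : IsClosed (M : Set L)) (he : e ∈ M) (hM : ∀ i, Set.MapsTo (R i) M M) : M = ⊤ := by
  rw [eq_top_iff, ← hdense, ← hMc.submodule_topologicalClosure_eq]
  exact topologicalClosure_mono (span_wordOrbit_le he hM)

variable [CompleteSpace L]

theorem inner_wordProd_apply_of_adjoint_eigen {μ : Fin n → ℂ} {y : L}
    (hy : ∀ i, adjoint (R i) y = μ i • y) (α : List (Fin n)) (e : L) :
    inner ℂ (wordProd R α e) y = (α.map μ).prod * inner ℂ e y := by
  induction α with
  | nil => simp [wordProd_nil]
  | cons i α ih =>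
    rw [wordProd_cons_apply, ← adjoint_inner_right, hy, inner_smul_right, ih]
    simp [mul_assoc]

theorem eq_zero_of_adjoint_eigen_of_inner_eq_zero {e y : L} {μ : Fin n → ℂ}
    (hdense : (span ℂ (wordOrbit R e)).topologicalClosure = ⊤)
    (hy : ∀ i, adjoint (R i) y = μ i • y) (hey : inner ℂ e y = 0) : y = 0 := by
  have hle : span ℂ (wordOrbit R e) ≤ (ℂ ∙ y)ᗮ := by
    rw [span_le]
    rintro _ ⟨α, rfl⟩
    rw [SetLike.mem_coe, mem_orthogonal_singleton_iff_inner_left,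
      inner_wordProd_apply_of_adjoint_eigen hy, hey, mul_zero]
  have hyy : y ∈ (ℂ ∙ y)ᗮ := by
    rw [← (ℂ ∙ y).isClosed_orthogonal.submodule_topologicalClosure_eq]
    exact topologicalClosure_mono hle (hdense ▸ mem_top)
  exact inner_self_eq_zero.mp (mem_orthogonal_singleton_iff_inner_left.mp hyy)

theorem eq_inner_smul_of_adjoint_eigen {e x : L} {μ : Fin n → ℂ} (he : ‖e‖ = 1)
    (hdense : (span ℂ (wordOrbit R e)).topologicalClosure = ⊤)
    (heig : ∀ i, adjoint (R i) e = μ i • e) (hx : ∀ i, adjoint (R i) x = μ i • x) :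
    x = inner ℂ e x • e := by
  have hee : inner ℂ e e = (1 : ℂ) := by simp [he]
  refine sub_eq_zero.mp (eq_zero_of_adjoint_eigen_of_inner_eq_zero (μ := μ) hdense ?_ ?_)
  · intro i
    simp only [map_sub, map_smul, hx i, heig i, smul_sub, smul_comm (μ i)]
  · rw [inner_sub_right, inner_smul_right, hee, mul_one, sub_self]

end WordProd

theorem stmt18_general {n : ℕ} (w : Fin n → ℂ)
    {L : Type*} [NormedAddCommGroup L] [InnerProductSpace ℂ L] [CompleteSpace L]
    (e : L) (he : ‖e‖ = 1)
    (W : Fin n → L →L[ℂ] L)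
    (heig : ∀ i : Fin n, adjoint (W i) e = (starRingEnd ℂ) (w i) • e)
    (hmin : (Submodule.span ℂ {x : L | ∃ α : List (Fin n),
      x = wordProd W α e}).topologicalClosure = ⊤) :
    ∀ N : Submodule ℂ L, IsClosed (N : Set L) →
      (∀ i : Fin n, ∀ x ∈ N, W i x ∈ N ∧ adjoint (W i) x ∈ N) →
      N = ⊥ ∨ N = ⊤ := by
  intro N hN hinv
  have : CompleteSpace N := hN.completeSpace_coe
  have hW (i : Fin n) : Set.MapsTo (W i) N N := fun x hx => (hinv i x hx).1
  have hWadj (i : Fin n) : Set.MapsTo (adjoint (W i)) N N := fun x hx => (hinv i x hx).2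
  have hWorth (i : Fin n) : Set.MapsTo (W i) Nᗮ Nᗮ := by
    simpa using mapsTo_adjoint_orthogonal (hWadj i)
  set p := N.starProjection e
  have hp_eig (i : Fin n) : adjoint (W i) p = (starRingEnd ℂ) (w i) • p := by
    have hcomm := commute_starProjection_of_mapsTo (hWadj i) (mapsTo_adjoint_orthogonal (hW i))
    rw [← mul_apply_eq_comp, ← hcomm.eq, mul_apply_eq_comp, heig, map_smul]
  have hp : p = inner ℂ e p • e := eq_inner_smul_of_adjoint_eigen he hmin heig hp_eig
  rcases eq_or_ne (inner ℂ e p) 0 with hc | hc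
  · left
    have he_orth : e ∈ Nᗮ := N.starProjection_apply_eq_zero_iff.mp <| by
      change p = 0
      rw [hp, hc, zero_smul]
    exact (orthogonal_eq_top_iff N).mp
      (eq_top_of_mem_of_dense_span_wordOrbit hmin N.isClosed_orthogonal he_orth hWorth)
  · right
    have he_mem : e ∈ N := by
      rw [← inv_smul_smul₀ hc e, ← hp]
      exact N.smul_mem _ (N.starProjection_apply_mem e)
    exact eq_top_of_mem_of_dense_span_wordOrbit hmin hN he_mem hW

/-- the minimal isometric dilation of a point `w` of the unit sphere of
`ℂⁿ` (viewed as a one-dimensional tuple) acts irreducibly: it implements the GNS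
representation of the Cuntz state associated to `w`. -/
theorem stmt18 {n : ℕ} (w : Fin n → ℂ) (hw : ∑ i : Fin n, ‖w i‖ ^ 2 = 1)
    {L : Type*} [NormedAddCommGroup L] [InnerProductSpace ℂ L] [CompleteSpace L]
    (e : L) (he : ‖e‖ = 1)
    (W : Fin n → L →L[ℂ] L)
    (hisom : ∀ i j : Fin n, adjoint (W i) ∘L W j = if i = j then 1 else 0)
    (heig : ∀ i : Fin n, adjoint (W i) e = (starRingEnd ℂ) (w i) • e)
    (hmin : (Submodule.span ℂ {x : L | ∃ α : List (Fin n),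
      x = wordProd W α e}).topologicalClosure = ⊤) :
    ∀ N : Submodule ℂ L, IsClosed (N : Set L) →
      (∀ i : Fin n, ∀ x ∈ N, W i x ∈ N ∧ adjoint (W i) x ∈ N) →
      N = ⊥ ∨ N = ⊤ :=
  stmt18_general w e he W heig hmin
end

section
/- Let H be a two-dimensional complex Hilbert space with orthonormal basis {u, v}, contained as a closed subspace in a complex Hilbert space L. Let W_1, W_2 be bounded operators on L with W_i^* W_j = δ_{ij} I, satisfying W_1^* u = v, W_1^* v = 0, W_2^* u = 0, W_2^* v = u (so that W is an isometric dilation of the tuple R_1, R_2 on H given by R_1 v = u, R_1 u = 0, R_2 u = v, R_2 v = 0, which satisfies R_1 R_1^* + R_2 R_2^* = I), and suppose the closed linear span of {W^α h : h ∈ H, α a word} is L. Then the maximal commuting piece of W is trivial: the only x ∈ L with (W_i^* W_j^* − W_j^* W_i^*)(W^α)^* x = 0 for all i, j ∈ {1,2} and all words α is x = 0. -/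
/-! `W₀` and `W₁` are isometries with `W₀* u = v`, `W₁* v = u` and `‖u‖ = ‖v‖`, so the equality
case of Cauchy–Schwarz gives `W₀ v = u` and `W₁ u = v`: `u` is fixed by `T = W₀W₁`. The maximal
commuting piece is invariant under every `Wᵢ*`, and on it `‖T* z‖ = ‖W₁* W₀* z‖` is at most
`‖W₀* z‖` and, by commutativity, at most `‖W₁* z‖`; so the row-contraction inequality
`‖W₀* z‖² + ‖W₁* z‖² ≤ ‖z‖²` shows that `T*` halves squared norms there. Hence
`⟪z, u⟫ = ⟪T*ᵏ z, u⟫ → 0`: the commuting piece is orthogonal to `u`, to `v = W₁ u`, and therefore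
to every `W^α h`, and minimality of the dilation forces it to vanish. -/

open ContinuousLinearMap

open Filter Topology

section RowIsometry

variable {𝕜 E F : Type*} [RCLike 𝕜]
  [NormedAddCommGroup E] [InnerProductSpace 𝕜 E] [CompleteSpace E]
  [NormedAddCommGroup F] [InnerProductSpace 𝕜 F] [CompleteSpace F]

theorem norm_adjoint_apply_le_of_adjoint_comp_self {A : F →L[𝕜] E} (hA : adjoint A ∘L A = 1)
    (z : E) : ‖adjoint A z‖ ≤ ‖z‖ := by
  have hA₁ : ‖A‖ ≤ 1 := opNorm_le_bound _ zero_le_one fun y => by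
    rw [(norm_map_iff_adjoint_comp_self A).mpr hA, one_mul]
  calc ‖adjoint A z‖ ≤ ‖adjoint A‖ * ‖z‖ := le_opNorm _ _
    _ ≤ ‖z‖ := by
      rw [LinearIsometryEquiv.norm_map]
      exact mul_le_of_le_one_left (norm_nonneg _) hA₁

theorem apply_eq_of_adjoint_apply_eq {A : F →L[𝕜] E} (hA : adjoint A ∘L A = 1) {a : E} {b : F}
    (h : adjoint A a = b) (hab : ‖a‖ = ‖b‖) : A b = a := by
  have hAb : ‖A b‖ = ‖b‖ := (norm_map_iff_adjoint_comp_self A).mpr hA b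
  have hinner : inner 𝕜 (A b) a = (‖b‖ ^ 2 : 𝕜) := by
    rw [← adjoint_inner_right, h, inner_self_eq_norm_sq_to_K]
  have hsq : ‖A b - a‖ ^ 2 = 0 := by
    rw [@norm_sub_sq 𝕜, hinner, hAb, hab]
    norm_cast
    ring
  rw [← sub_eq_zero, ← norm_eq_zero]
  exact pow_eq_zero_iff two_ne_zero |>.mp hsq

theorem norm_sq_adjoint_add_norm_sq_adjoint_le {A B : F →L[𝕜] E} (hA : adjoint A ∘L A = 1)
    (hB : adjoint B ∘L B = 1) (hAB : adjoint A ∘L B = 0) (z : E) :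
    ‖adjoint A z‖ ^ 2 + ‖adjoint B z‖ ^ 2 ≤ ‖z‖ ^ 2 := by
  set a := adjoint A z
  set b := adjoint B z
  have hcross : inner 𝕜 (A a) (B b) = 0 := by
    rw [← adjoint_inner_right, ← comp_apply, hAB, zero_apply, inner_zero_right]
  have hp : ‖A a + B b‖ ^ 2 = ‖a‖ ^ 2 + ‖b‖ ^ 2 := by
    rw [@norm_add_sq 𝕜, hcross, (norm_map_iff_adjoint_comp_self A).mpr hA,
      (norm_map_iff_adjoint_comp_self B).mpr hB]
    simp
  have hzp : RCLike.re (inner 𝕜 z (A a + B b)) = ‖a‖ ^ 2 + ‖b‖ ^ 2 := by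
    rw [inner_add_right, ← adjoint_inner_left A a z, ← adjoint_inner_left B b z,
      inner_self_eq_norm_sq_to_K, inner_self_eq_norm_sq_to_K]
    norm_cast
  nlinarith [@norm_sub_sq 𝕜 _ _ _ _ z (A a + B b), sq_nonneg ‖z - (A a + B b)‖]

theorem two_mul_norm_sq_adjoint_adjoint_le {A B : E →L[𝕜] E} (hA : adjoint A ∘L A = 1)
    (hB : adjoint B ∘L B = 1) (hAB : adjoint A ∘L B = 0) {z : E}
    (hz : adjoint A (adjoint B z) = adjoint B (adjoint A z)) :
    2 * ‖adjoint B (adjoint A z)‖ ^ 2 ≤ ‖z‖ ^ 2 := by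
  have h₁ : ‖adjoint B (adjoint A z)‖ ≤ ‖adjoint A z‖ :=
    norm_adjoint_apply_le_of_adjoint_comp_self hB _
  have h₂ : ‖adjoint B (adjoint A z)‖ ≤ ‖adjoint B z‖ :=
    hz ▸ norm_adjoint_apply_le_of_adjoint_comp_self hA _
  have h₁' := pow_le_pow_left₀ (norm_nonneg _) h₁ 2
  have h₂' := pow_le_pow_left₀ (norm_nonneg _) h₂ 2
  linarith [norm_sq_adjoint_add_norm_sq_adjoint_le hA hB hAB z]

end RowIsometry

theorem inner_eq_zero_of_apply_eq_self_of_contracting_adjoint {𝕜 E : Type*} [RCLike 𝕜]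
    [NormedAddCommGroup E] [InnerProductSpace 𝕜 E] [CompleteSpace E] {T : E →L[𝕜] E} {u : E}
    (hu : T u = u) {M : Set E} (hM : Set.MapsTo (adjoint T) M M) {c : ℝ} (hc₀ : 0 ≤ c)
    (hc : c < 1) (hT : ∀ z ∈ M, ‖adjoint T z‖ ^ 2 ≤ c * ‖z‖ ^ 2) {z : E} (hz : z ∈ M) :
    inner 𝕜 z u = 0 := by
  have hnorm : ∀ k : ℕ, ‖(adjoint T)^[k] z‖ ^ 2 ≤ c ^ k * ‖z‖ ^ 2 := by
    intro k
    induction k with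
    | zero => simp
    | succ k ih =>
      rw [Function.iterate_succ_apply', pow_succ]
      calc _ ≤ c * ‖(adjoint T)^[k] z‖ ^ 2 := hT _ (hM.iterate k hz)
        _ ≤ c * (c ^ k * ‖z‖ ^ 2) := mul_le_mul_of_nonneg_left ih hc₀
        _ = _ := by ring
  have hinner : ∀ k : ℕ, inner 𝕜 ((adjoint T)^[k] z) u = inner 𝕜 z u := by
    intro k
    induction k with
    | zero => rfl
    | succ k ih => rw [Function.iterate_succ_apply', adjoint_inner_left, hu, ih]
  have hbound : ∀ k : ℕ, ‖inner 𝕜 z u‖ ^ 2 ≤ c ^ k * (‖z‖ ^ 2 * ‖u‖ ^ 2) := fun k => by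
    rw [← hinner k, ← mul_assoc]
    calc _ ≤ (‖(adjoint T)^[k] z‖ * ‖u‖) ^ 2 :=
          pow_le_pow_left₀ (norm_nonneg _) (norm_inner_le_norm _ _) 2
      _ ≤ _ := by rw [mul_pow]; gcongr; exact hnorm k
  have hlim : Tendsto (fun k : ℕ => c ^ k * (‖z‖ ^ 2 * ‖u‖ ^ 2)) atTop (𝓝 0) := by
    simpa using (tendsto_pow_atTop_nhds_zero_of_lt_one hc₀ hc).mul_const (‖z‖ ^ 2 * ‖u‖ ^ 2)
  have hsq : ‖inner 𝕜 z u‖ ^ 2 = 0 := le_antisymm (ge_of_tendsto' hlim hbound) (sq_nonneg _)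
  exact norm_eq_zero.mp (pow_eq_zero_iff two_ne_zero |>.mp hsq)

theorem eq_zero_of_forall_inner_eq_zero_of_span_dense {𝕜 E : Type*} [RCLike 𝕜]
    [NormedAddCommGroup E] [InnerProductSpace 𝕜 E] {S : Set E}
    (hS : (Submodule.span 𝕜 S).topologicalClosure = ⊤) {x : E}
    (hx : ∀ w ∈ S, inner 𝕜 x w = 0) : x = 0 :=
  (Submodule.dense_iff_topologicalClosure_eq_top.mpr hS).eq_zero_of_inner_left 𝕜 fun _ hw =>
    (Submodule.isOrtho_span.mpr (by simpa using hx)).inner_eq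
      (Submodule.mem_span_singleton_self x) hw

section Words

variable {n : ℕ} {L : Type*} [NormedAddCommGroup L] [InnerProductSpace ℂ L] [CompleteSpace L]
  (W : Fin n → L →L[ℂ] L)

theorem adjoint_wordProd_append_apply (α β : List (Fin n)) (x : L) :
    adjoint (wordProd W (α ++ β)) x = adjoint (wordProd W β) (adjoint (wordProd W α) x) := by
  simp [wordProd, mul_def, adjoint_comp]

def commutingPiece : Set L :=
  {x | ∀ (i j : Fin n) (α : List (Fin n)),
    adjoint (W i) (adjoint (W j) (adjoint (wordProd W α) x)) =
    adjoint (W j) (adjoint (W i) (adjoint (wordProd W α) x))}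

theorem mapsTo_adjoint_wordProd_commutingPiece (α : List (Fin n)) :
    Set.MapsTo (adjoint (wordProd W α)) (commutingPiece W) (commutingPiece W) :=
  fun x hx i j β => by simpa only [adjoint_wordProd_append_apply] using hx i j (α ++ β)

variable {W} in
theorem adjoint_comm_of_mem_commutingPiece {x : L} (hx : x ∈ commutingPiece W) (i j : Fin n) :
    adjoint (W i) (adjoint (W j) x) = adjoint (W j) (adjoint (W i) x) := by
  simpa [wordProd, adjoint_one] using hx i j []

variable {W} in
theorem norm_sq_adjoint_wordProd_pair_le {i j : Fin n} (hi : adjoint (W i) ∘L W i = 1)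
    (hj : adjoint (W j) ∘L W j = 1) (hij : adjoint (W i) ∘L W j = 0) {z : L}
    (hz : z ∈ commutingPiece W) : ‖adjoint (wordProd W [i, j]) z‖ ^ 2 ≤ 1 / 2 * ‖z‖ ^ 2 := by
  have := two_mul_norm_sq_adjoint_adjoint_le hi hj hij (adjoint_comm_of_mem_commutingPiece hz i j)
  simp only [wordProd, List.map, List.prod_cons, List.prod_nil, mul_one, mul_def, adjoint_comp,
    comp_apply]
  linarith

end Words

theorem stmt19_general {L : Type*} [NormedAddCommGroup L] [InnerProductSpace ℂ L] [CompleteSpace L]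
    (u v : L) (hu : ‖u‖ = 1) (hv : ‖v‖ = 1)
    (W : Fin 2 → L →L[ℂ] L)
    (hisom : ∀ i j : Fin 2, adjoint (W i) ∘L W j = if i = j then 1 else 0)
    (h1u : adjoint (W 0) u = v)
    (h2v : adjoint (W 1) v = u)
    (hmin : (Submodule.span ℂ {x : L | ∃ (α : List (Fin 2)) (h : L),
      h ∈ (Submodule.span ℂ {u, v} : Submodule ℂ L) ∧
      x = wordProd W α h}).topologicalClosure = ⊤) :
    ∀ x : L, (∀ (i j : Fin 2) (α : List (Fin 2)),
      adjoint (W i) (adjoint (W j) (adjoint (wordProd W α) x)) =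
      adjoint (W j) (adjoint (W i) (adjoint (wordProd W α) x))) → x = 0 := by
  intro x hx
  have hW : ∀ i, adjoint (W i) ∘L W i = 1 := fun i => by simpa using hisom i i
  have hW₀₁ : adjoint (W 0) ∘L W 1 = 0 := by simpa using hisom 0 1
  have hW₀ : W 0 v = u := apply_eq_of_adjoint_apply_eq (hW 0) h1u (hu.trans hv.symm)
  have hW₁ : W 1 u = v := apply_eq_of_adjoint_apply_eq (hW 1) h2v (hv.trans hu.symm)
  have hperp_u : ∀ y ∈ commutingPiece W, inner ℂ y u = 0 := fun y hy =>
    inner_eq_zero_of_apply_eq_self_of_contracting_adjoint (T := wordProd W [0, 1])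
      (by simp [wordProd, hW₀, hW₁]) (mapsTo_adjoint_wordProd_commutingPiece W _)
      (by norm_num) (by norm_num)
      (fun _ hz => norm_sq_adjoint_wordProd_pair_le (hW 0) (hW 1) hW₀₁ hz) hy
  have hperp_v : ∀ y ∈ commutingPiece W, inner ℂ y v = 0 := fun y hy => by
    rw [← hW₁, ← adjoint_inner_left]
    simpa [wordProd] using hperp_u _ (mapsTo_adjoint_wordProd_commutingPiece W [1] hy)
  refine eq_zero_of_forall_inner_eq_zero_of_span_dense hmin ?_
  rintro _ ⟨α, h, hh, rfl⟩
  have hy := mapsTo_adjoint_wordProd_commutingPiece W α hx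
  rw [← adjoint_inner_left]
  exact (Submodule.isOrtho_span.mpr (by simp [hperp_u _ hy, hperp_v _ hy])).inner_eq
    (Submodule.mem_span_singleton_self _) hh

/-- the minimal isometric dilation of the noncommuting 2-tuple
`R₁ = |u⟩⟨v|, R₂ = |v⟩⟨u|` on the two-dimensional space `H = span{u, v}` (which
satisfies `R₁R₁^* + R₂R₂^* = I`) has trivial maximal commuting piece. -/
theorem stmt19 {L : Type*} [NormedAddCommGroup L] [InnerProductSpace ℂ L] [CompleteSpace L]
    (u v : L) (hu : ‖u‖ = 1) (hv : ‖v‖ = 1) (huv : (inner ℂ u v : ℂ) = 0)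
    (W : Fin 2 → L →L[ℂ] L)
    (hisom : ∀ i j : Fin 2, adjoint (W i) ∘L W j = if i = j then 1 else 0)
    (h1u : adjoint (W 0) u = v) (h1v : adjoint (W 0) v = 0)
    (h2u : adjoint (W 1) u = 0) (h2v : adjoint (W 1) v = u)
    (hmin : (Submodule.span ℂ {x : L | ∃ (α : List (Fin 2)) (h : L),
      h ∈ (Submodule.span ℂ {u, v} : Submodule ℂ L) ∧
      x = wordProd W α h}).topologicalClosure = ⊤) :
    ∀ x : L, (∀ (i j : Fin 2) (α : List (Fin 2)),
      adjoint (W i) (adjoint (W j) (adjoint (wordProd W α) x)) =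
      adjoint (W j) (adjoint (W i) (adjoint (wordProd W α) x))) → x = 0 :=
  stmt19_general u v hu hv W hisom h1u h2v hmin
end
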